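/- arXiv:1305.3738 — 9 statements merged into one kernel-verified Lean document; each statement's English description precedes it below -/
import Mathlib

section
/- Let I be a nonempty finite index set, M = (M_{j,k})_{j,k∈I} a real symmetric positive-semidefinite matrix, and (u_{j,k})_{j,k∈I} a symmetric matrix with entries in [0,∞) such that for all j ≠ k in I: (i) min_{ℓ∈I} u_{ℓ,ℓ} ≥ u_{j,k}, and (ii) for every q ∈ I \ {j,k}, u_{j,k} ≥ min(u_{j,q}, u_{k,q}). Then the entrywise (Hadamard) product matrix M^u with entries M^u_{j,k} = u_{j,k} M_{j,k} is symmetric positive-semidefinite. -/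
/-!
Write `u = ∫₀^∞ 𝟙[t < u] dt` (layer cake). For each threshold `t` the tree conditions make
`j ∼ k :↔ t < u j k` symmetric and transitive, so `𝟙[t < u] ∘ M` is block diagonal with
principal blocks of `M`, hence positive semidefinite; integrating over `t` gives the claim.
Since `u` takes finitely many values, the integral is replaced by an induction that peels off
the smallest positive value of `u`.
-/

open Finset

theorem sum_mul_nonneg_of_sum_ite_lt_nonneg {ι : Type*} [Fintype ι] (u a : ι → ℝ)
    (hu : ∀ i, 0 ≤ u i) (h : ∀ t, 0 ≤ t → 0 ≤ ∑ i, if t < u i then a i else 0) :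
    0 ≤ ∑ i, u i * a i := by
  induction hn : #{i | 0 < u i} using Nat.strong_induction_on generalizing u with
  | _ n ih =>
  rcases (univ.filter (0 < u ·)).eq_empty_or_nonempty with hempty | hpos
  · simp only [filter_eq_empty_iff, mem_univ, true_implies, not_lt] at hempty
    have hzero : ∀ i, u i = 0 := fun i => (@hempty i).antisymm (hu i)
    simp [hzero]
  obtain ⟨i₀, hi₀, hmin⟩ := exists_min_image _ u hpos
  set m := u i₀
  have hm : 0 < m := (mem_filter.mp hi₀).2
  set u' : ι → ℝ := fun i => max (u i - m) 0
  have hsplit : ∀ i, u i * a i = m * (if 0 < u i then a i else 0) + u' i * a i := by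
    intro i
    by_cases hi : 0 < u i
    · have : m ≤ u i := hmin i (mem_filter.mpr ⟨mem_univ i, hi⟩)
      simp only [u', hi, ↓reduceIte, max_eq_left (sub_nonneg.mpr this)]
      ring
    · have : u i = 0 := (hu i).antisymm' (not_lt.mp hi)
      simp [u', this, hm.le]
  have hfewer : #{i | 0 < u' i} < n := by
    rw [← hn]
    refine card_lt_card ⟨monotone_filter_right _ fun i _ hi => ?_, fun hsub => ?_⟩
    · linarith [(lt_max_iff.mp hi).resolve_right (lt_irrefl 0)]
    · simpa [u', m] using (mem_filter.mp (hsub hi₀)).2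
  have hu' : 0 ≤ ∑ i, u' i * a i := by
    refine ih _ hfewer u' (fun i => le_max_right _ _) (fun t ht => ?_) rfl
    have hlt : ∀ i, (t < u' i ↔ t + m < u i) := fun i => by
      simp only [u', lt_max_iff, lt_sub_iff_add_lt, not_lt.mpr ht, or_false]
    simpa only [hlt] using h (t + m) (by linarith)
  calc 0 ≤ m * ∑ i, (if 0 < u i then a i else 0) + ∑ i, u' i * a i :=
        add_nonneg (mul_nonneg hm.le (h 0 le_rfl)) hu'
    _ = ∑ i, u i * a i := by simp only [hsplit, sum_add_distrib, mul_sum]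

theorem sum_ite_apply_eq_nonneg {I κ : Type*} [Fintype I] [DecidableEq κ] (M : I → I → ℝ)
    (hM : ∀ x : I → ℝ, 0 ≤ ∑ j, ∑ k, M j k * x j * x k) (f : I → κ) (x : I → ℝ) :
    0 ≤ ∑ j, ∑ k, if f j = f k then M j k * x j * x k else 0 := by
  set xc : κ → I → ℝ := fun c j => if f j = c then x j else 0
  have hblock : ∀ j k, (if f j = f k then M j k * x j * x k else 0) =
      ∑ c ∈ univ.image f, M j k * xc c j * xc c k := by
    intro j k
    simp only [xc, mul_ite, ite_mul, mul_zero, zero_mul]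
    rw [sum_ite_eq _ _ _, if_pos (mem_image_of_mem f (mem_univ k))]
  calc 0 ≤ ∑ c ∈ univ.image f, ∑ j, ∑ k, M j k * xc c j * xc c k :=
        sum_nonneg fun c _ => hM (xc c)
    _ = _ := by
        simp only [hblock]
        rw [sum_comm]
        exact sum_congr rfl fun j _ => sum_comm

theorem sum_ite_rel_nonneg {I : Type*} [Fintype I] (M : I → I → ℝ)
    (hM : ∀ x : I → ℝ, 0 ≤ ∑ j, ∑ k, M j k * x j * x k)
    (r : I → I → Prop) [DecidableRel r] (hsymm : ∀ j k, r j k → r k j)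
    (htrans : ∀ j k l, r j k → r k l → r j l) (x : I → ℝ) :
    0 ≤ ∑ j, ∑ k, if r j k then M j k * x j * x k else 0 := by
  classical
  have hrefl : ∀ j k, r j k → r j j := fun j k h => htrans _ _ _ h (hsymm _ _ h)
  have hclass : ∀ j k, r k k → ({l | r j l} = {l | r k l} ↔ r j k) := fun j k hk =>
    ⟨fun h => (h ▸ hk : k ∈ {l | r j l}),
      fun h => Set.ext fun l => ⟨htrans _ _ _ (hsymm _ _ h), htrans _ _ _ h⟩⟩
  set y : I → ℝ := fun j => if r j j then x j else 0
  have hterm : ∀ j k, (if r j k then M j k * x j * x k else 0) =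
      if {l | r j l} = {l | r k l} then M j k * y j * y k else 0 := by
    intro j k
    by_cases hj : r j j
    · by_cases hk : r k k
      · simp [y, hj, hk, hclass j k hk]
      · have hjk : ¬ r j k := fun h => hk (hrefl k j (hsymm j k h))
        simp [y, hk, hjk]
    · have hjk : ¬ r j k := fun h => hj (hrefl j k h)
      simp [y, hj, hjk]
  simp only [hterm]
  exact sum_ite_apply_eq_nonneg M hM _ y

theorem min_le_of_tree_cond {I : Type*} (u : I → I → ℝ) (husymm : ∀ j k, u j k = u k j)
    (hcond1 : ∀ j k, j ≠ k → ∀ ℓ, u j k ≤ u ℓ ℓ)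
    (hcond2 : ∀ j k, j ≠ k → ∀ q, q ≠ j → q ≠ k → min (u j q) (u k q) ≤ u j k)
    (j k l : I) : min (u j k) (u k l) ≤ u j l := by
  rcases eq_or_ne j l with rfl | hjl
  · rcases eq_or_ne j k with rfl | hjk
    · exact min_le_left _ _
    · exact (min_le_left _ _).trans (hcond1 j k hjk j)
  rcases eq_or_ne k j with rfl | hkj
  · exact min_le_right _ _
  rcases eq_or_ne k l with rfl | hkl
  · exact min_le_left _ _
  simpa only [husymm l k] using hcond2 j l hjl k hkj hkl

theorem hadamard_tree_psd_general {I : Type*} [Fintype I]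
    (M u : I → I → ℝ)
    (hMsymm : ∀ j k, M j k = M k j)
    (hMpsd : ∀ x : I → ℝ, 0 ≤ ∑ j, ∑ k, M j k * x j * x k)
    (husymm : ∀ j k, u j k = u k j)
    (hunonneg : ∀ j k, 0 ≤ u j k)
    (hcond1 : ∀ j k, j ≠ k → ∀ ℓ, u j k ≤ u ℓ ℓ)
    (hcond2 : ∀ j k, j ≠ k → ∀ q, q ≠ j → q ≠ k → min (u j q) (u k q) ≤ u j k) :
    (∀ j k, u j k * M j k = u k j * M k j) ∧
    (∀ x : I → ℝ, 0 ≤ ∑ j, ∑ k, u j k * M j k * x j * x k) := by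
  refine ⟨fun j k => by rw [husymm, hMsymm], fun x => ?_⟩
  have hultra := min_le_of_tree_cond u husymm hcond1 hcond2
  have hlevel : ∀ t, 0 ≤ t → 0 ≤ ∑ j, ∑ k, if t < u j k then M j k * x j * x k else 0 :=
    fun t _ => sum_ite_rel_nonneg M hMpsd (fun j k => t < u j k) (fun j k h => husymm j k ▸ h)
      (fun j k l hjk hkl => (lt_min hjk hkl).trans_le (hultra j k l)) x
  have := sum_mul_nonneg_of_sum_ite_lt_nonneg (fun p : I × I => u p.1 p.2)
    (fun p => M p.1 p.2 * x p.1 * x p.2) (fun p => hunonneg p.1 p.2)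
    (by simpa only [Fintype.sum_prod_type] using hlevel)
  simpa only [Fintype.sum_prod_type, mul_assoc] using this

theorem hadamard_tree_psd {I : Type*} [Fintype I] [Nonempty I]
    (M u : I → I → ℝ)
    (hMsymm : ∀ j k, M j k = M k j)
    (hMpsd : ∀ x : I → ℝ, 0 ≤ ∑ j, ∑ k, M j k * x j * x k)
    (husymm : ∀ j k, u j k = u k j)
    (hunonneg : ∀ j k, 0 ≤ u j k)
    (hcond1 : ∀ j k, j ≠ k → ∀ ℓ, u j k ≤ u ℓ ℓ)
    (hcond2 : ∀ j k, j ≠ k → ∀ q, q ≠ j → q ≠ k → min (u j q) (u k q) ≤ u j k) :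
    (∀ j k, u j k * M j k = u k j * M k j) ∧
    (∀ x : I → ℝ, 0 ≤ ∑ j, ∑ k, u j k * M j k * x j * x k) :=
  hadamard_tree_psd_general M u hMsymm hMpsd husymm hunonneg hcond1 hcond2
end

section
/- For every real x and all real numbers A, B with 0 ≤ A < B ≤ 1, one has sinh(xA)·sinh(x(1−B))/(x·sinh(x)) ≤ 1/4, where the expression is interpreted by its limit A(1−B) ≤ 1/4 when x = 0. -/
/-!
Write `a = xA`, `b = x(1 - B)`, so that `|a + b| ≤ |x|`. Then
`4 sinh a sinh b = 2 (cosh (a + b) - cosh (a - b)) ≤ 2 (cosh x - 1) = 4 sinh² (x/2)`, and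
`sinh² (x/2) ≤ (x/2) sinh (x/2) cosh (x/2) = x sinh x / 4` because `tanh t ≤ t` for `t ≥ 0`.
-/

open Real

namespace Real

theorem sinh_le_mul_cosh {t : ℝ} (ht : 0 ≤ t) : sinh t ≤ t * cosh t := by
  have deriv_le : ∀ s ∈ interior (Set.Icc 0 t), deriv sinh s ≤ cosh t := by
    rw [interior_Icc]
    rintro s ⟨hs₀, hst⟩
    rw [deriv_sinh, cosh_le_cosh, abs_of_pos hs₀, abs_of_nonneg ht]
    exact hst.le
  simpa [mul_comm] using (convex_Icc 0 t).image_sub_le_mul_sub_of_deriv_le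
    continuous_sinh.continuousOn differentiable_sinh.differentiableOn deriv_le
    0 ⟨le_rfl, ht⟩ t ⟨ht, le_rfl⟩ ht

theorem two_mul_cosh_sub_one_le_mul_sinh (x : ℝ) : 2 * (cosh x - 1) ≤ x * sinh x := by
  wlog hx : 0 ≤ x
  · simpa using this (-x) (by linarith)
  have hcosh : cosh x - 1 = 2 * sinh (x / 2) ^ 2 := by
    have := cosh_two_mul (x / 2)
    rw [two_mul, add_halves, cosh_sq] at this
    linarith
  have hsinh : sinh x = 2 * sinh (x / 2) * cosh (x / 2) := by
    rw [← sinh_two_mul, two_mul, add_halves]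
  have hx2 : 0 ≤ x / 2 := by linarith
  rw [hcosh, hsinh]
  nlinarith [sinh_le_mul_cosh hx2, sinh_nonneg_iff.2 hx2]

theorem four_mul_sinh_mul_sinh_le {a b x : ℝ} (h : |a + b| ≤ |x|) :
    4 * (sinh a * sinh b) ≤ x * sinh x := by
  have hcosh : cosh (a + b) ≤ cosh x := cosh_le_cosh.2 h
  calc 4 * (sinh a * sinh b) = 2 * (cosh (a + b) - cosh (a - b)) := by
        rw [cosh_add, cosh_sub]; ring
    _ ≤ 2 * (cosh x - 1) := by linarith [one_le_cosh (a - b)]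
    _ ≤ x * sinh x := two_mul_cosh_sub_one_le_mul_sinh x

end Real

theorem sinh_quotient_le_quarter (x A B : ℝ) (hA : 0 ≤ A) (hAB : A < B) (hB : B ≤ 1) :
    (if x = 0 then A * (1 - B)
      else Real.sinh (x * A) * Real.sinh (x * (1 - B)) / (x * Real.sinh x)) ≤ 1 / 4 := by
  split_ifs with hx
  · calc A * (1 - B) ≤ B * (1 - B) := mul_le_mul_of_nonneg_right hAB.le (by linarith)
      _ ≤ 1 / 4 := by nlinarith [sq_nonneg (2 * B - 1)]
  · have hpos : 0 < x * sinh x := by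
      linarith [one_lt_cosh.2 hx, two_mul_cosh_sub_one_le_mul_sinh x]
    have hsum : |x * A + x * (1 - B)| ≤ |x| := by
      rw [← mul_add, abs_mul]
      exact mul_le_of_le_one_right (abs_nonneg x) (abs_le.2 ⟨by linarith, by linarith⟩)
    rw [div_le_iff₀ hpos]
    linarith [four_mul_sinh_mul_sinh_le hsum]
end

section
/- Let m ≥ 1, α = (α_1,…,α_m) ∈ ℕ^m, a_1,…,a_m ≥ 0, and λ a positive integer. Set |α| = α_1 + ⋯ + α_m. Then (a_1^{α_1}/α_1!)···(a_m^{α_m}/α_m!)·(a_1^λ + ⋯ + a_m^λ) ≤ (|α| + m)·(|α| + λ)^{λ−1}·exp(a_1 + ⋯ + a_m). -/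
/-!
Write `x ^ n / n! * x ^ k = ((n + k)! / n!) * x ^ (n + k) / (n + k)!`. The last factor is a term of
the exponential series, so it is at most `exp x`, and `(n + k)! / n! = (n + 1) ⋯ (n + k)` is at most
`(n + 1) * (n + k) ^ (k - 1)`. Bounding the remaining factors `a j ^ α j / (α j)!` by `exp (a j)` gives,
for each `i`, `(∏ j, a j ^ α j / (α j)!) * a i ^ k ≤ (α i + 1) * (|α| + k) ^ (k - 1) * exp (∑ j, a j)`,
and summing over `i` gives the factor `|α| + m`.
-/

open Finset Nat Real

theorem Nat.factorial_add_le_factorial_succ_mul_pow (n k : ℕ) :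
    (n + k)! ≤ (n + 1)! * (n + k) ^ (k - 1) := by
  cases k with
  | zero => simpa using factorial_le n.le_succ
  | succ k =>
    calc (n + (k + 1))! = (n + 1)! * (n + 1 + 1).ascFactorial k := by
          rw [factorial_mul_ascFactorial, Nat.add_right_comm, Nat.add_assoc]
      _ ≤ (n + 1)! * (n + 1 + k) ^ k := Nat.mul_le_mul_left _ (ascFactorial_le_pow_add _ _)
      _ = (n + 1)! * (n + (k + 1)) ^ (k + 1 - 1) := by
          rw [Nat.add_sub_cancel, Nat.add_right_comm, Nat.add_assoc]

theorem Real.pow_div_factorial_mul_pow_le_exp {x : ℝ} (hx : 0 ≤ x) (n k : ℕ) :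
    x ^ n / n ! * x ^ k ≤ (n + 1) * (n + k) ^ (k - 1) * exp x := by
  have hfact : ((n + k)! : ℝ) ≤ (n + 1) * (n + k) ^ (k - 1) * n ! := by
    have := factorial_add_le_factorial_succ_mul_pow n k
    rw [factorial_succ] at this
    exact_mod_cast this.trans_eq (by ring)
  calc x ^ n / n ! * x ^ k = x ^ (n + k) / (n + k)! * ((n + k)! / n !) := by
        rw [pow_add]; field_simp
    _ ≤ exp x * ((n + 1) * (n + k) ^ (k - 1)) :=
        mul_le_mul (pow_div_factorial_le_exp x hx _) (div_le_of_le_mul₀ (by positivity)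
          (by positivity) hfact) (by positivity) (exp_pos x).le
    _ = (n + 1) * (n + k) ^ (k - 1) * exp x := mul_comm _ _

theorem Real.prod_pow_div_factorial_mul_pow_le {ι : Type*} [Fintype ι] (α : ι → ℕ) {a : ι → ℝ}
    (ha : ∀ i, 0 ≤ a i) (i : ι) (k : ℕ) :
    (∏ j, a j ^ α j / (α j)!) * a i ^ k ≤ (α i + 1) * (α i + k) ^ (k - 1) * exp (∑ j, a j) := by
  classical
  have hrest : ∏ j ∈ univ.erase i, a j ^ α j / (α j)! ≤ ∏ j ∈ univ.erase i, exp (a j) :=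
    prod_le_prod (fun j _ => by have := ha j; positivity)
      fun j _ => pow_div_factorial_le_exp (a j) (ha j) _
  rw [← mul_prod_erase univ _ (mem_univ i), exp_sum, ← mul_prod_erase univ _ (mem_univ i)]
  calc a i ^ α i / (α i)! * (∏ j ∈ univ.erase i, a j ^ α j / (α j)!) * a i ^ k
      = a i ^ α i / (α i)! * a i ^ k * ∏ j ∈ univ.erase i, a j ^ α j / (α j)! := by ring
    _ ≤ (α i + 1) * (α i + k) ^ (k - 1) * exp (a i) * ∏ j ∈ univ.erase i, exp (a j) :=
        mul_le_mul (pow_div_factorial_mul_pow_le_exp (ha i) _ _) hrest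
          (prod_nonneg fun j _ => by have := ha j; positivity) (by positivity)
    _ = (α i + 1) * (α i + k) ^ (k - 1) * (exp (a i) * ∏ j ∈ univ.erase i, exp (a j)) := by ring

theorem prod_pow_div_factorial_mul_sum_pow_le_general (m : ℕ)
    (α : Fin m → ℕ) (a : Fin m → ℝ) (ha : ∀ i, 0 ≤ a i)
    (lam : ℕ) :
    (∏ i, a i ^ α i / (α i).factorial) * (∑ i, a i ^ lam) ≤
      ((∑ i, (α i : ℝ)) + m) * ((∑ i, (α i : ℝ)) + lam) ^ (lam - 1) *
        Real.exp (∑ i, a i) := by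
  set S : ℝ := ∑ i, (α i : ℝ)
  have hαS : ∀ i, (α i : ℝ) ≤ S := fun i =>
    single_le_sum (fun j _ => (α j).cast_nonneg) (mem_univ i)
  calc (∏ i, a i ^ α i / (α i)!) * ∑ i, a i ^ lam
      = ∑ i, (∏ j, a j ^ α j / (α j)!) * a i ^ lam := mul_sum _ _ _
    _ ≤ ∑ i, ((α i : ℝ) + 1) * (S + lam) ^ (lam - 1) * exp (∑ j, a j) :=
        sum_le_sum fun i _ => (prod_pow_div_factorial_mul_pow_le α ha i lam).trans (by
          gcongr
          exact hαS i)
    _ = (S + m) * (S + lam) ^ (lam - 1) * exp (∑ j, a j) := by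
        rw [← sum_mul, ← sum_mul, sum_add_distrib]
        simp [S]

theorem prod_pow_div_factorial_mul_sum_pow_le (m : ℕ) (hm : 1 ≤ m)
    (α : Fin m → ℕ) (a : Fin m → ℝ) (ha : ∀ i, 0 ≤ a i)
    (lam : ℕ) (hlam : 1 ≤ lam) :
    (∏ i, a i ^ α i / (α i).factorial) * (∑ i, a i ^ lam) ≤
      ((∑ i, (α i : ℝ)) + m) * ((∑ i, (α i : ℝ)) + lam) ^ (lam - 1) *
        Real.exp (∑ i, a i) :=
  prod_pow_div_factorial_mul_sum_pow_le_general m α a ha lam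
end

section
/- Let ω > 0, t > 0, and s ∈ [0,1]. Define ϖ(s) := (sinh(ωts) + sinh(ωt(1−s)))/sinh(ωt). Then 1/cosh(ωt/2) ≤ ϖ(s) ≤ 1. -/
/-!
With `x = ωt/2` and `y = ωt(s - 1/2)` the sum-to-product formula gives
`ϖ(s) = cosh y / cosh x`. Since `|y| ≤ x`, monotonicity of `cosh` in `|·|` and `1 ≤ cosh y`
yield both bounds.
-/

open Real Set

lemma Real.sinh_add_add_sinh_sub (x y : ℝ) :
    sinh (x + y) + sinh (x - y) = 2 * sinh x * cosh y := by
  rw [sinh_add, sinh_sub]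
  ring

lemma Real.sinh_mul_add_sinh_mul_one_sub_div_sinh {a : ℝ} (ha : a ≠ 0) (s : ℝ) :
    (sinh (a * s) + sinh (a * (1 - s))) / sinh a = cosh (a * (s - 1 / 2)) / cosh (a / 2) := by
  have hsinh : sinh (a / 2) ≠ 0 := sinh_ne_zero.2 (by positivity)
  have hnum : sinh (a * s) + sinh (a * (1 - s)) = 2 * sinh (a / 2) * cosh (a * (s - 1 / 2)) := by
    rw [← sinh_add_add_sinh_sub]
    ring_nf
  have hden : sinh a = 2 * sinh (a / 2) * cosh (a / 2) := by
    rw [← sinh_two_mul]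
    ring_nf
  rw [hnum, hden, mul_div_mul_left _ _ (by positivity)]

lemma Real.cosh_mul_sub_half_le_cosh_half (a : ℝ) {s : ℝ} (hs : s ∈ Icc (0 : ℝ) 1) :
    cosh (a * (s - 1 / 2)) ≤ cosh (a / 2) := by
  have hs' : |s - 1 / 2| ≤ 1 / 2 := abs_le.2 ⟨by linarith [hs.1], by linarith [hs.2]⟩
  rw [cosh_le_cosh, abs_mul, abs_div, abs_two]
  calc |a| * |s - 1 / 2| ≤ |a| * (1 / 2) := by gcongr
    _ = |a| / 2 := by ring

theorem varpi_bounds (ω t s : ℝ) (hω : 0 < ω) (ht : 0 < t) (hs : s ∈ Set.Icc (0:ℝ) 1) :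
    1 / Real.cosh (ω * t / 2) ≤
      (Real.sinh (ω * t * s) + Real.sinh (ω * t * (1 - s))) / Real.sinh (ω * t) ∧
    (Real.sinh (ω * t * s) + Real.sinh (ω * t * (1 - s))) / Real.sinh (ω * t) ≤ 1 := by
  rw [sinh_mul_add_sinh_mul_one_sub_div_sinh (by positivity)]
  exact ⟨div_le_div_of_nonneg_right (one_le_cosh _) (cosh_pos _).le,
    (div_le_one (cosh_pos _)).2 (cosh_mul_sub_half_le_cosh_half _ hs)⟩
end

section
/- Let J(z) := ∑_{n≥0} (−1)^n z^n / (n!)^2. Then for every B ≥ 0 and every complex σ, |J(Bσ)| ≤ exp(2 B^{1/2} |Im(σ^{1/2})|), where σ^{1/2} is the principal square root. -/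
/-!
As `J(w²) = J₀(2w)`, Bessel's integral gives `π J(w²) = ∫₀^π cos (2 w sin θ) dθ` for every
complex `w`; it follows by integrating the Taylor series of the cosine
term by term against the Wallis integrals `∫₀^π sin^(2n) = π (2n)! / (4ⁿ (n!)²)`.
Since `‖cos z‖ ≤ exp |Im z|`, the integrand is bounded by `exp (2 |Im w|)`, and the theorem is
the case `w = √B σ^(1/2)`.
-/

open Real Nat intervalIntegral

noncomputable def J (z : ℂ) : ℂ := ∑' n : ℕ, (-1) ^ n * z ^ n / ((n ! : ℂ) ^ 2)

theorem integral_sin_pow_two_mul (n : ℕ) :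
    ∫ x in 0..π, sin x ^ (2 * n) = π * (2 * n)! / (4 ^ n * (n ! : ℝ) ^ 2) := by
  induction n with
  | zero => simp
  | succ k ih =>
    rw [show 2 * (k + 1) = 2 * k + 2 by ring, integral_sin_pow, ih]
    simp only [sin_zero, sin_pi, factorial_succ, cast_mul, pow_succ]
    push_cast
    field_simp
    ring

theorem Complex.norm_cos_le_exp_abs_im (z : ℂ) : ‖Complex.cos z‖ ≤ Real.exp |z.im| := by
  have h2 : ‖2 * Complex.cos z‖ ≤ 2 * Real.exp |z.im| := by
    rw [Complex.two_cos, two_mul]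
    refine (norm_add_le _ _).trans (add_le_add ?_ ?_) <;>
      simp only [Complex.norm_exp, Real.exp_le_exp, neg_mul, Complex.neg_re, Complex.mul_I_re]
    · exact neg_le_abs _
    · exact (neg_neg z.im).le.trans (le_abs_self _)
  rw [norm_mul, Complex.norm_two] at h2
  linarith

section Bessel

variable (w : ℂ)

theorem integral_cos_taylor_term_mul_sin (n : ℕ) :
    ∫ θ in 0..π, (-1) ^ n * (2 * w * sin θ) ^ (2 * n) / ((2 * n)! : ℂ)
      = π * ((-1) ^ n * (w ^ 2) ^ n / ((n ! : ℂ) ^ 2)) := by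
  have hsplit : ∀ θ : ℝ, (-1) ^ n * (2 * w * sin θ) ^ (2 * n) / ((2 * n)! : ℂ)
      = (-1) ^ n * (2 * w) ^ (2 * n) / (2 * n)! * ((sin θ ^ (2 * n) : ℝ) : ℂ) := by
    intro θ
    push_cast
    ring
  have hfac : ((2 * n)! : ℂ) ≠ 0 := cast_ne_zero.2 (factorial_ne_zero _)
  simp_rw [hsplit, integral_const_mul, integral_ofReal, integral_sin_pow_two_mul, pow_mul,
    mul_pow]
  push_cast
  field_simp
  ring

theorem norm_cos_taylor_term_mul_sin_le (n : ℕ) (θ : ℝ) :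
    ‖(-1) ^ n * (2 * w * sin θ) ^ (2 * n) / ((2 * n)! : ℂ)‖ ≤ (2 * ‖w‖) ^ (2 * n) / (2 * n)! := by
  have hbase : ‖2 * w * sin θ‖ ≤ 2 * ‖w‖ := by
    rw [norm_mul, Complex.norm_real, norm_mul, Complex.norm_two]
    exact mul_le_of_le_one_right (by positivity) (abs_sin_le_one θ)
  rw [norm_div, norm_mul, norm_pow, norm_neg, norm_one, one_pow, one_mul, norm_pow,
    Complex.norm_natCast]
  gcongr

theorem integral_cos_two_mul_sin_eq_pi_mul_J :
    ∫ θ in 0..π, Complex.cos (2 * w * sin θ) = π * J (w ^ 2) := by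
  have hsum : HasSum (fun n : ℕ => π * ((-1) ^ n * (w ^ 2) ^ n / ((n ! : ℂ) ^ 2)))
      (∫ θ in 0..π, Complex.cos (2 * w * sin θ)) := by
    simp_rw [← integral_cos_taylor_term_mul_sin]
    refine hasSum_integral_of_dominated_convergence
      (fun n _ => (2 * ‖w‖) ^ (2 * n) / (2 * n)!) (fun n => by fun_prop)
      (fun n => .of_forall fun θ _ => norm_cos_taylor_term_mul_sin_le w n θ)
      (.of_forall fun _ _ => (Real.summable_pow_div_factorial _).comp_injective
        (mul_right_injective₀ two_ne_zero))
      intervalIntegrable_const (.of_forall fun θ _ => Complex.hasSum_cos _)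
  rw [← hsum.tsum_eq, tsum_mul_left, J]

end Bessel

theorem norm_J_sq_le (w : ℂ) : ‖J (w ^ 2)‖ ≤ Real.exp (2 * |w.im|) := by
  have hcos : ∀ θ ∈ Set.uIoc 0 π, ‖Complex.cos (2 * w * sin θ)‖ ≤ Real.exp (2 * |w.im|) := by
    intro θ _
    refine (Complex.norm_cos_le_exp_abs_im _).trans (Real.exp_le_exp.2 ?_)
    rw [show (2 * w * (sin θ : ℂ)).im = 2 * w.im * sin θ by simp [-Complex.ofReal_sin],
      abs_mul, abs_mul, abs_two]
    exact mul_le_of_le_one_right (by positivity) (abs_sin_le_one θ)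
  have h := norm_integral_le_of_norm_le_const hcos
  rw [integral_cos_two_mul_sin_eq_pi_mul_J, norm_mul, Complex.norm_real, norm_of_nonneg pi_pos.le,
    sub_zero, abs_of_pos pi_pos, mul_comm] at h
  exact le_of_mul_le_mul_right h pi_pos

theorem J_bound (B : ℝ) (hB : 0 ≤ B) (σ : ℂ) :
    ‖∑' n : ℕ, (-1) ^ n * ((B : ℂ) * σ) ^ n / ((n.factorial : ℂ) ^ 2)‖ ≤
      Real.exp (2 * Real.sqrt B * |(σ ^ ((1:ℂ)/2)).im|) := by
  set w : ℂ := (Real.sqrt B : ℂ) * σ ^ ((1:ℂ)/2)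
  have hsq : w ^ 2 = (B : ℂ) * σ := by
    rw [mul_pow, ← Complex.ofReal_pow, Real.sq_sqrt hB, one_div]
    congr 1
    exact_mod_cast Complex.cpow_nat_inv_pow σ two_ne_zero
  have him : |w.im| = Real.sqrt B * |(σ ^ ((1:ℂ)/2)).im| := by
    rw [Complex.im_ofReal_mul, abs_mul, abs_of_nonneg (Real.sqrt_nonneg B)]
  have h := norm_J_sq_le w
  rwa [hsq, him, ← mul_assoc] at h
end

section
/- Let γ ∈ (0,1), K > 0, and let â : [0,∞) → ℂ be continuous with |â(τ)| ≤ C e^{K'τ} for some C > 0, K' > K. Define b̂(τ) := (sin(πγ)/π) ∫_0^1 â(τu) u^{γ−1}(1−u)^{−γ} du. Then for every complex h with Re(1/h) > K', one has (1/Γ(γ)) ∫_0^∞ â(τ) e^{−τ/h} (τ/h)^{γ−1} dτ/h = ∫_0^∞ b̂(τ) e^{−τ/h} dτ/h. -/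
/-!
Substituting `x = τ u` writes `b̂(τ)` as `(sin πγ / π) ∫₀^τ â(x) x^(γ-1) (τ-x)^(-γ) dx`,
a convolution on `(0, ∞)` of `â(x) x^(γ-1)` with `t^(-γ)`. With `p = 1/h`, the Laplace transform
at `p` of a convolution is the product of the Laplace transforms, and that of `t^(-γ)` is
`Γ(1-γ) p^(γ-1)`; for complex `p` this follows from the real case by analytic continuation in
`p`. The reflection formula `Γ(γ) Γ(1-γ) = π / sin πγ` then identifies both sides.
-/

open MeasureTheory Set Complex Filter
open scoped Topology Real

namespace Complex

lemma norm_cpow_mul_exp_neg_mul (s p : ℂ) {t : ℝ} (ht : 0 < t) :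
    ‖(t : ℂ) ^ (s - 1) * cexp (-(p * t))‖ = t ^ (s.re - 1) * Real.exp (-(p.re * t)) := by
  rw [norm_mul, norm_cpow_eq_rpow_re_of_pos ht, norm_exp]
  simp

lemma continuousOn_cpow_mul_exp_neg_mul (s p : ℂ) :
    ContinuousOn (fun t : ℝ => (t : ℂ) ^ (s - 1) * cexp (-(p * t))) (Ioi 0) := fun t ht =>
  ((continuousAt_ofReal_cpow_const _ _ (Or.inr (ne_of_gt ht))).mul
    (by fun_prop)).continuousWithinAt

lemma integrableOn_cpow_mul_exp_neg_mul_Ioi {s p : ℂ} (hs : 0 < s.re) (hp : 0 < p.re) :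
    IntegrableOn (fun t : ℝ => (t : ℂ) ^ (s - 1) * cexp (-(p * t))) (Ioi 0) := by
  have hbound : IntegrableOn (fun t : ℝ => t ^ (s.re - 1) * Real.exp (-p.re * t ^ (1 : ℝ)))
      (Ioi 0) :=
    integrableOn_rpow_mul_exp_neg_mul_rpow (by linarith) one_pos hp
  refine hbound.mono' ((continuousOn_cpow_mul_exp_neg_mul s p).aestronglyMeasurable
    measurableSet_Ioi) ((ae_restrict_iff' measurableSet_Ioi).mpr (.of_forall fun t ht => ?_))
  rw [norm_cpow_mul_exp_neg_mul s p ht, Real.rpow_one, neg_mul]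

lemma hasDerivAt_cpow_mul_exp_neg_mul (s p : ℂ) {t : ℝ} (ht : 0 < t) :
    HasDerivAt (fun q : ℂ => (t : ℂ) ^ (s - 1) * cexp (-(q * t)))
      (-((t : ℂ) ^ (s + 1 - 1) * cexp (-(p * t)))) p := by
  have ht' : (t : ℂ) ≠ 0 := ofReal_ne_zero.mpr ht.ne'
  have hlin : HasDerivAt (fun q : ℂ => -(q * t)) (-t) p := by
    simpa using ((hasDerivAt_id p).mul_const (t : ℂ)).fun_neg
  refine (hlin.cexp.const_mul _).congr_deriv ?_
  rw [add_sub_cancel_right, cpow_sub _ _ ht', cpow_one]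
  field_simp

lemma differentiableOn_integral_cpow_mul_exp_neg_mul_Ioi {s : ℂ} (hs : 0 < s.re) :
    DifferentiableOn ℂ (fun p : ℂ => ∫ t in Ioi (0 : ℝ), (t : ℂ) ^ (s - 1) * cexp (-(p * t)))
      {p | 0 < p.re} := by
  intro p (hp : 0 < p.re)
  set ε := p.re / 2 with hεp
  have hε : 0 < ε := half_pos hp
  have hball : ∀ q ∈ Metric.ball p ε, ε ≤ q.re := fun q hq => by
    have := (abs_re_le_norm (q - p)).trans (mem_ball_iff_norm.mp hq).le
    rw [sub_re, abs_le] at this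
    linarith
  have hs1 : 0 < (s + 1).re := by simp only [add_re, one_re]; linarith
  have hmeas : ∀ᶠ q in 𝓝 p,
      AEStronglyMeasurable (fun t : ℝ => (t : ℂ) ^ (s - 1) * cexp (-(q * t)))
        (volume.restrict (Ioi 0)) := by
    filter_upwards [Metric.ball_mem_nhds p hε] with q hq
    exact (integrableOn_cpow_mul_exp_neg_mul_Ioi hs (hε.trans_le (hball q hq))).aestronglyMeasurable
  have hbound : ∀ᵐ t : ℝ ∂(volume.restrict (Ioi 0)), ∀ q ∈ Metric.ball p ε,
      ‖-((t : ℂ) ^ (s + 1 - 1) * cexp (-(q * t)))‖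
        ≤ ‖(t : ℂ) ^ (s + 1 - 1) * cexp (-((ε : ℂ) * t))‖ := by
    refine (ae_restrict_iff' measurableSet_Ioi).mpr (.of_forall fun t (ht : 0 < t) q hq => ?_)
    rw [norm_neg, norm_cpow_mul_exp_neg_mul _ _ ht, norm_cpow_mul_exp_neg_mul _ _ ht, ofReal_re]
    gcongr
    exact hball q hq
  have hderiv := hasDerivAt_integral_of_dominated_loc_of_deriv_le (Metric.ball_mem_nhds p hε)
    hmeas (integrableOn_cpow_mul_exp_neg_mul_Ioi hs hp)
    (integrableOn_cpow_mul_exp_neg_mul_Ioi hs1 hp).neg.aestronglyMeasurable hbound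
    (integrableOn_cpow_mul_exp_neg_mul_Ioi hs1 (by rwa [ofReal_re])).norm
    ((ae_restrict_iff' measurableSet_Ioi).mpr (.of_forall fun t ht q _ =>
      hasDerivAt_cpow_mul_exp_neg_mul s q ht))
  exact hderiv.2.differentiableAt.differentiableWithinAt

lemma integral_cpow_mul_exp_neg_mul_Ioi_of_re_pos {s p : ℂ} (hs : 0 < s.re) (hp : 0 < p.re) :
    ∫ t in Ioi (0 : ℝ), (t : ℂ) ^ (s - 1) * cexp (-(p * t)) = (1 / p) ^ s * Gamma s := by
  set U : Set ℂ := {q | 0 < q.re}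
  have hU : IsOpen U := isOpen_lt continuous_const continuous_re
  have hlhs := (differentiableOn_integral_cpow_mul_exp_neg_mul_Ioi hs).analyticOnNhd hU
  have hrhs : AnalyticOnNhd ℂ (fun q : ℂ => (1 / q) ^ s * Gamma s) U := by
    refine DifferentiableOn.analyticOnNhd (fun q (hq : 0 < q.re) => ?_) hU
    have hq0 : q ≠ 0 := by rintro rfl; simp at hq
    have hslit : 1 / q ∈ slitPlane := by
      rw [mem_slitPlane_iff, one_div, inv_re]
      exact Or.inl (div_pos hq (normSq_pos.mpr hq0))
    exact (((differentiableAt_const 1).div differentiableAt_id hq0).cpow_const hslit).mul_const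
      _ |>.differentiableWithinAt
  have hreal : ∀ᶠ x : ℝ in 𝓝[≠] 1, ∫ t in Ioi (0 : ℝ), (t : ℂ) ^ (s - 1) * cexp (-(x * t))
      = (1 / (x : ℂ)) ^ s * Gamma s := by
    filter_upwards [nhdsWithin_le_nhds (Ioi_mem_nhds one_pos)] with x hx
    exact integral_cpow_mul_exp_neg_mul_Ioi hs hx
  have hofReal : Tendsto ofReal (𝓝[≠] 1) (𝓝[≠] 1) := by
    simpa using continuous_ofReal.continuousWithinAt.tendsto_nhdsWithin
      (x := (1 : ℝ)) (t := {(1 : ℂ)}ᶜ) (fun x hx => by simpa using hx)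
  exact hlhs.eqOn_of_preconnected_of_frequently_eq hrhs (convex_halfSpace_re_gt 0).isPreconnected
    (by simp) (hofReal.frequently hreal.frequently) hp

lemma integrableOn_mul_cpow_mul_exp_neg_mul_Ioi {a : ℝ → ℂ}
    (ha : AEStronglyMeasurable a (volume.restrict (Ioi 0))) {C K' : ℝ}
    (hgrowth : ∀ t, 0 < t → ‖a t‖ ≤ C * Real.exp (K' * t)) {s p : ℂ} (hs : 0 < s.re)
    (hp : K' < p.re) :
    IntegrableOn (fun t : ℝ => a t * ((t : ℂ) ^ (s - 1) * cexp (-(p * t)))) (Ioi 0) := by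
  have hdom := integrableOn_cpow_mul_exp_neg_mul_Ioi hs (p := p - K') (by simpa using hp)
  refine (hdom.norm.const_mul C).mono'
    (ha.mul ((continuousOn_cpow_mul_exp_neg_mul s p).aestronglyMeasurable measurableSet_Ioi))
    ((ae_restrict_iff' measurableSet_Ioi).mpr (.of_forall fun t (ht : 0 < t) => ?_))
  rw [norm_mul, norm_cpow_mul_exp_neg_mul _ _ ht, norm_cpow_mul_exp_neg_mul _ _ ht]
  calc ‖a t‖ * (t ^ (s.re - 1) * Real.exp (-(p.re * t)))
      ≤ C * Real.exp (K' * t) * (t ^ (s.re - 1) * Real.exp (-(p.re * t))) := by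
        gcongr
        exact hgrowth t ht
    _ = C * (t ^ (s.re - 1) * Real.exp (-((p - K').re * t))) := by
        rw [sub_re, ofReal_re, mul_assoc, mul_left_comm (Real.exp _), ← Real.exp_add]
        ring_nf

lemma ofReal_mul_cpow {r : ℝ} (hr : 0 < r) (z s : ℂ) :
    ((r : ℂ) * z) ^ s = (r : ℂ) ^ s * z ^ s := by
  rcases eq_or_ne z 0 with rfl | hz
  · rcases eq_or_ne s 0 with rfl | hs
    · simp
    · simp [zero_cpow hs]
  have hr' : (r : ℂ) ≠ 0 := ofReal_ne_zero.mpr hr.ne'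
  rw [cpow_def_of_ne_zero (mul_ne_zero hr' hz), cpow_def_of_ne_zero hr', cpow_def_of_ne_zero hz,
    log_ofReal_mul hr hz, add_mul, exp_add, ofReal_log hr.le]

lemma sin_pi_mul_div_pi_mul_Gamma_one_sub {s : ℂ} (hs : sin (π * s) ≠ 0) :
    sin (π * s) / π * Gamma (1 - s) = 1 / Gamma s := by
  have hπ : (π : ℂ) ≠ 0 := ofReal_ne_zero.mpr Real.pi_ne_zero
  have hprod : Gamma s * Gamma (1 - s) ≠ 0 := by
    rw [Gamma_mul_Gamma_one_sub]
    exact div_ne_zero hπ hs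
  rw [eq_div_iff (left_ne_zero_of_mul hprod), mul_assoc, mul_comm (Gamma (1 - s)),
    Gamma_mul_Gamma_one_sub]
  field_simp

end Complex

lemma integral_comp_mul_mul_rpow_mul_one_sub_rpow (a : ℝ → ℂ) (γ : ℝ) {τ : ℝ} (hτ : 0 < τ) :
    ∫ u in (0 : ℝ)..1, a (τ * u) * ((u ^ (γ - 1) : ℝ) : ℂ) * (((1 - u) ^ (-γ) : ℝ) : ℂ)
      = ∫ x in (0 : ℝ)..τ, a x * ((x ^ (γ - 1) : ℝ) : ℂ) * (((τ - x) ^ (-γ) : ℝ) : ℂ) := by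
  have hsub := intervalIntegral.smul_integral_comp_mul_left (a := 0) (b := 1)
    (fun x => a x * ((x ^ (γ - 1) : ℝ) : ℂ) * (((τ - x) ^ (-γ) : ℝ) : ℂ)) τ
  rw [mul_zero, mul_one] at hsub
  rw [← hsub, ← intervalIntegral.integral_smul]
  refine intervalIntegral.integral_congr fun u hu => ?_
  rw [uIcc_of_le zero_le_one] at hu
  -- the kernel is homogeneous of degree `-1` in `(u, 1 - u)`
  have hkernel : τ * ((τ * u) ^ (γ - 1) * (τ - τ * u) ^ (-γ)) = u ^ (γ - 1) * (1 - u) ^ (-γ) := by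
    rw [show τ - τ * u = τ * (1 - u) by ring, Real.mul_rpow hτ.le hu.1,
      Real.mul_rpow hτ.le (sub_nonneg.mpr hu.2)]
    have : τ * (τ ^ (γ - 1) * τ ^ (-γ)) = 1 := by
      rw [← Real.rpow_add hτ, show γ - 1 + -γ = -1 by ring, Real.rpow_neg_one,
        mul_inv_cancel₀ hτ.ne']
    linear_combination (u ^ (γ - 1) * (1 - u) ^ (-γ)) * this
  have hkernel' := congrArg (fun r : ℝ => (r : ℂ)) hkernel
  rw [Complex.real_smul]
  push_cast at hkernel' ⊢
  linear_combination (-a (τ * u)) * hkernel'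

lemma integral_Ioi_integral_mul_rpow_mul_sub_rpow_mul_exp_neg_mul {a : ℝ → ℂ} {σ ρ : ℝ} {p : ℂ}
    (hρ : 0 < ρ) (hp : 0 < p.re)
    (hf : IntegrableOn (fun t : ℝ => a t * ((t : ℂ) ^ ((σ : ℂ) - 1) * cexp (-(p * t)))) (Ioi 0)) :
    ∫ τ in Ioi (0 : ℝ),
        (∫ x in (0 : ℝ)..τ, a x * ((x ^ (σ - 1) : ℝ) : ℂ) * (((τ - x) ^ (ρ - 1) : ℝ) : ℂ)) *
          cexp (-(p * τ))
      = (∫ t in Ioi (0 : ℝ), a t * ((t : ℂ) ^ ((σ : ℂ) - 1) * cexp (-(p * t)))) *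
          ((1 / p) ^ (ρ : ℂ) * Gamma ρ) := by
  set f : ℝ → ℂ := fun t => a t * ((t : ℂ) ^ ((σ : ℂ) - 1) * cexp (-(p * t)))
  set g : ℝ → ℂ := fun t => (t : ℂ) ^ ((ρ : ℂ) - 1) * cexp (-(p * t))
  have hg : IntegrableOn g (Ioi 0) := integrableOn_cpow_mul_exp_neg_mul_Ioi (by simpa) hp
  have hconv : ∀ τ ∈ Ioi (0 : ℝ),
      (∫ x in (0 : ℝ)..τ, a x * ((x ^ (σ - 1) : ℝ) : ℂ) * (((τ - x) ^ (ρ - 1) : ℝ) : ℂ)) *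
        cexp (-(p * τ)) = ∫ x in (0 : ℝ)..τ, f x * g (τ - x) := fun τ (hτ : 0 < τ) => by
    rw [← intervalIntegral.integral_mul_const]
    refine intervalIntegral.integral_congr fun x hx => ?_
    rw [uIcc_of_le hτ.le] at hx
    have hexp : cexp (-(p * x)) * cexp (-(p * ((τ : ℂ) - x))) = cexp (-(p * τ)) := by
      rw [← exp_add]
      ring_nf
    simp only [f, g]
    rw [ofReal_cpow hx.1, ofReal_cpow (sub_nonneg.mpr hx.2)]
    push_cast
    linear_combination (-a x * (x : ℂ) ^ ((σ : ℂ) - 1) * ((τ : ℂ) - x) ^ ((ρ : ℂ) - 1)) * hexp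
  have hmul := integral_posConvolution hf hg (ContinuousLinearMap.mul ℝ ℂ)
  simp only [ContinuousLinearMap.mul_apply'] at hmul
  rw [setIntegral_congr_fun measurableSet_Ioi hconv, hmul,
    integral_cpow_mul_exp_neg_mul_Ioi_of_re_pos (by simpa) hp]

theorem hv_gamma_to_one_laplace_general (γ : ℝ) (hγ : γ ∈ Set.Ioo (0:ℝ) 1) (K : ℝ) (hK : 0 < K)
    (a : ℝ → ℂ) (ha : Continuous a)
    (C K' : ℝ) (hK' : K < K')
    (hgrowth : ∀ τ : ℝ, 0 ≤ τ → ‖a τ‖ ≤ C * Real.exp (K' * τ))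
    (b : ℝ → ℂ)
    (hb : ∀ τ : ℝ, b τ = ((Real.sin (Real.pi * γ) / Real.pi : ℝ) : ℂ) *
        ∫ u in (0:ℝ)..1, a (τ * u) * ((u ^ (γ - 1) : ℝ) : ℂ) * (((1 - u) ^ (-γ) : ℝ) : ℂ))
    (h : ℂ) (hh : K' < (1 / h).re) :
    (1 / Complex.Gamma γ) *
        ∫ τ in Set.Ioi (0:ℝ), a τ * Complex.exp (-(τ : ℂ) / h) *
          ((τ : ℂ) / h) ^ ((γ : ℂ) - 1) / h =
      ∫ τ in Set.Ioi (0:ℝ), b τ * Complex.exp (-(τ : ℂ) / h) / h := by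
  obtain ⟨hγ0, hγ1⟩ := hγ
  rw [one_div] at hh
  have hp : 0 < h⁻¹.re := by linarith
  have hlhs : ∀ τ ∈ Ioi (0 : ℝ), a τ * cexp (-(τ : ℂ) / h) * ((τ : ℂ) / h) ^ ((γ : ℂ) - 1) / h
      = h⁻¹ ^ ((γ : ℂ) - 1) * h⁻¹ * (a τ * ((τ : ℂ) ^ ((γ : ℂ) - 1) * cexp (-(h⁻¹ * τ)))) :=
    fun τ (hτ : 0 < τ) => by
      simp only [div_eq_mul_inv, ofReal_mul_cpow hτ]
      ring_nf
  have hrhs : ∀ τ ∈ Ioi (0 : ℝ), b τ * cexp (-(τ : ℂ) / h) / h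
      = ((Real.sin (π * γ) / π : ℝ) : ℂ) * h⁻¹ * ((∫ x in (0 : ℝ)..τ,
          a x * ((x ^ (γ - 1) : ℝ) : ℂ) * (((τ - x) ^ ((1 - γ) - 1) : ℝ) : ℂ)) *
            cexp (-(h⁻¹ * τ))) := fun τ (hτ : 0 < τ) => by
    rw [hb τ, integral_comp_mul_mul_rpow_mul_one_sub_rpow a γ hτ, sub_sub_cancel_left]
    ring_nf
  have hsin : sin (π * γ) ≠ 0 := by
    rw [← ofReal_mul, ← ofReal_sin]
    exact_mod_cast (Real.sin_pos_of_pos_of_lt_pi (by positivity) (by nlinarith [Real.pi_pos])).ne'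
  rw [setIntegral_congr_fun measurableSet_Ioi hlhs, setIntegral_congr_fun measurableSet_Ioi hrhs,
    integral_const_mul, integral_const_mul,
    integral_Ioi_integral_mul_rpow_mul_sub_rpow_mul_exp_neg_mul (by linarith) hp
      (integrableOn_mul_cpow_mul_exp_neg_mul_Ioi ha.aestronglyMeasurable
        (fun t ht => hgrowth t ht.le) (by simpa) hh),
    one_div h⁻¹, inv_cpow _ _ (slitPlane_arg_ne_pi (mem_slitPlane_iff.mpr (Or.inl hp))),
    ← cpow_neg, ofReal_sub, ofReal_one, neg_sub,
    ← sin_pi_mul_div_pi_mul_Gamma_one_sub hsin]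
  push_cast
  ring

theorem hv_gamma_to_one_laplace (γ : ℝ) (hγ : γ ∈ Set.Ioo (0:ℝ) 1) (K : ℝ) (hK : 0 < K)
    (a : ℝ → ℂ) (ha : Continuous a)
    (C K' : ℝ) (hC : 0 < C) (hK' : K < K')
    (hgrowth : ∀ τ : ℝ, 0 ≤ τ → ‖a τ‖ ≤ C * Real.exp (K' * τ))
    (b : ℝ → ℂ)
    (hb : ∀ τ : ℝ, b τ = ((Real.sin (Real.pi * γ) / Real.pi : ℝ) : ℂ) *
        ∫ u in (0:ℝ)..1, a (τ * u) * ((u ^ (γ - 1) : ℝ) : ℂ) * (((1 - u) ^ (-γ) : ℝ) : ℂ))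
    (h : ℂ) (hh : K' < (1 / h).re) :
    (1 / Complex.Gamma γ) *
        ∫ τ in Set.Ioi (0:ℝ), a τ * Complex.exp (-(τ : ℂ) / h) *
          ((τ : ℂ) / h) ^ ((γ : ℂ) - 1) / h =
      ∫ τ in Set.Ioi (0:ℝ), b τ * Complex.exp (-(τ : ℂ) / h) / h :=
  hv_gamma_to_one_laplace_general γ hγ K hK a ha C K' hK' hgrowth b hb h hh
end

section
/- Let K_2 > 0 and let â : [0,∞) → ℂ be continuously differentiable with max(|â(0)|, sup_{σ≥0} |â'(σ)|) ≤ K_2. Define b̂(σ) := e^{â(0)} (1 + ∑_{n≥1} (1/n!) Â_n(σ)) where Â_n(σ) = σ^n ∫_{u_1+⋯+u_n ≤ 1} â'(u_1σ)⋯â'(u_nσ) du. Then the series converges for every σ ≥ 0 and |b̂(σ)| ≤ e^{K_2} exp(2 K_2^{1/2} σ^{1/2}). -/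
/-! The integrand of `Ahat g n σ` is bounded by `K ^ n` on a simplex of volume `1 / n!`, so
`‖Ahat g n σ‖ ≤ (K σ) ^ n / n!` and the series is dominated by `∑ x ^ n / (n!) ^ 2` with `x = K σ`.
As `(2n)! ≤ 4 ^ n (n!) ^ 2`, that term is at most `(2 √x) ^ (2n) / (2n)!`, a term of the series
of `exp (2 √x)`. -/

open MeasureTheory

/-- `Ahat a n σ = σ^n ∫_{u_1+⋯+u_n ≤ 1, u_i ≥ 0} a(u_1 σ)⋯a(u_n σ) du`. -/
noncomputable def Ahat (a : ℝ → ℂ) (n : ℕ) (σ : ℝ) : ℂ :=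
  (σ : ℂ) ^ n *
    ∫ u in {u : Fin n → ℝ | (∀ i, 0 ≤ u i) ∧ ∑ i, u i ≤ 1}, ∏ i, a (u i * σ)

open scoped Nat

def cornerSimplex (n : ℕ) (c : ℝ) : Set (Fin n → ℝ) :=
  {u | (∀ i, 0 ≤ u i) ∧ ∑ i, u i ≤ c}

theorem isClosed_cornerSimplex (n : ℕ) (c : ℝ) : IsClosed (cornerSimplex n c) := by
  simp only [cornerSimplex, Set.ofPred_and, Set.ofPred_forall]
  exact (isClosed_iInter fun i => isClosed_le continuous_const (continuous_apply i)).inter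
    (isClosed_le (by fun_prop) continuous_const)

theorem cornerSimplex_eq_empty {n : ℕ} {c : ℝ} (hc : c < 0) : cornerSimplex n c = ∅ :=
  Set.eq_empty_of_forall_notMem fun _ hu =>
    hc.not_ge ((Finset.sum_nonneg fun i _ => hu.1 i).trans hu.2)

theorem cons_mem_cornerSimplex_iff {n : ℕ} {c x : ℝ} {v : Fin n → ℝ} :
    Fin.cons x v ∈ cornerSimplex (n + 1) c ↔ 0 ≤ x ∧ v ∈ cornerSimplex n (c - x) := by
  simp only [cornerSimplex, Set.mem_ofPred_eq, Fin.forall_fin_succ, Fin.sum_univ_succ,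
    Fin.cons_zero, Fin.cons_succ]
  constructor
  · rintro ⟨⟨hx, hv⟩, hsum⟩
    exact ⟨hx, hv, by linarith⟩
  · rintro ⟨hx, hv, hsum⟩
    exact ⟨⟨hx, hv⟩, by linarith⟩

theorem integral_sub_pow_div_factorial {c : ℝ} (n : ℕ) :
    ∫ x in (0 : ℝ)..c, (c - x) ^ n / n ! = c ^ (n + 1) / (n + 1)! := by
  rw [intervalIntegral.integral_div, intervalIntegral.integral_comp_sub_left (fun x => x ^ n),
    sub_self, sub_zero, integral_pow, Nat.factorial_succ]
  push_cast
  field_simp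
  ring

theorem volume_cornerSimplex (n : ℕ) {c : ℝ} (hc : 0 ≤ c) :
    volume (cornerSimplex n c) = ENNReal.ofReal (c ^ n / n !) := by
  induction n generalizing c with
  | zero =>
    have : cornerSimplex 0 c = Set.univ := by ext u; simp [cornerSimplex, hc]
    simp [this, volume_pi]
  | succ n ih =>
    -- Fubini over the first coordinate: the slice at `x ∈ [0, c]` is the simplex of size `c - x`.
    have hslice : ∀ x, volume {v : Fin n → ℝ | Fin.cons x v ∈ cornerSimplex (n + 1) c} =
        (Set.Icc 0 c).indicator (fun x => ENNReal.ofReal ((c - x) ^ n / n !)) x := by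
      intro x
      simp only [cons_mem_cornerSimplex_iff, Set.ofPred_and, Set.ofPred_mem_eq]
      by_cases hx : x ∈ Set.Icc 0 c
      · rw [Set.indicator_of_mem hx, ← ih (sub_nonneg.2 hx.2)]
        simp [hx.1]
      · rw [Set.indicator_of_notMem hx]
        rcases not_and_or.1 hx with hx0 | hxc
        · simp [hx0]
        · simp [cornerSimplex_eq_empty (sub_neg.2 (not_le.1 hxc))]
    have hmp := (volume_preserving_piFinSuccAbove (fun _ : Fin (n + 1) => ℝ) 0).symm
    rw [← hmp.measure_preimage (isClosed_cornerSimplex _ _).measurableSet.nullMeasurableSet,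
      Measure.volume_eq_prod, Measure.prod_apply
        ((isClosed_cornerSimplex _ _).measurableSet.preimage hmp.measurable)]
    simp only [Set.preimage, MeasurableEquiv.piFinSuccAbove_symm_apply, Fin.insertNthEquiv_zero]
    change ∫⁻ x, volume {v : Fin n → ℝ | Fin.cons x v ∈ cornerSimplex (n + 1) c} = _
    simp_rw [hslice]
    rw [lintegral_indicator measurableSet_Icc, ← ofReal_integral_eq_lintegral_ofReal,
      integral_Icc_eq_integral_Ioc, ← intervalIntegral.integral_of_le hc,
      integral_sub_pow_div_factorial]
    · exact (by fun_prop : Continuous fun x : ℝ => (c - x) ^ n / n !).integrableOn_Icc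
    · filter_upwards [ae_restrict_mem measurableSet_Icc] with x hx
      have := sub_nonneg.2 hx.2
      positivity

theorem norm_Ahat_le {g : ℝ → ℂ} {K σ : ℝ} (hσ : 0 ≤ σ) (hg : ∀ t, 0 ≤ t → ‖g t‖ ≤ K)
    (n : ℕ) : ‖Ahat g n σ‖ ≤ (K * σ) ^ n / n ! := by
  have hK : 0 ≤ K := (norm_nonneg _).trans (hg 0 le_rfl)
  have hvol : volume (cornerSimplex n 1) = ENNReal.ofReal (1 / n !) := by
    simpa using volume_cornerSimplex n zero_le_one
  have hprod : ∀ u ∈ cornerSimplex n 1, ‖∏ i, g (u i * σ)‖ ≤ K ^ n := fun u hu => by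
    simpa [norm_prod] using Finset.prod_le_prod (s := Finset.univ) (fun i _ => norm_nonneg _)
      fun i _ => hg _ (mul_nonneg (hu.1 i) hσ)
  have hint := norm_setIntegral_le_of_norm_le_const (hvol ▸ ENNReal.ofReal_lt_top) hprod
  rw [measureReal_def, hvol, ENNReal.toReal_ofReal (by positivity)] at hint
  calc ‖Ahat g n σ‖ = σ ^ n * ‖∫ u in cornerSimplex n 1, ∏ i, g (u i * σ)‖ := by
        rw [Ahat, norm_mul, norm_pow, Complex.norm_real, Real.norm_of_nonneg hσ]; rfl
    _ ≤ σ ^ n * (K ^ n * (1 / n !)) := by gcongr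
    _ = (K * σ) ^ n / n ! := by ring

theorem Nat.factorial_two_mul_le_four_pow_mul_sq (n : ℕ) : (2 * n)! ≤ 4 ^ n * n ! ^ 2 := by
  rw [← Nat.choose_mul_factorial_mul_factorial (by omega : n ≤ 2 * n),
    show 2 * n - n = n by omega, mul_assoc, ← sq, ← Nat.centralBinom_eq_two_mul_choose]
  exact Nat.mul_le_mul_right _ (Nat.centralBinom_le_four_pow n)

theorem pow_div_factorial_sq_le {x : ℝ} (hx : 0 ≤ x) (n : ℕ) :
    x ^ n / (n ! : ℝ) ^ 2 ≤ (2 * √x) ^ (2 * n) / (2 * n)! := by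
  have hpow : (2 * √x) ^ (2 * n) = 4 ^ n * x ^ n := by
    rw [pow_mul, mul_pow, Real.sq_sqrt hx, mul_pow]; norm_num
  have hfact : ((2 * n)! : ℝ) ≤ 4 ^ n * (n ! : ℝ) ^ 2 := by
    exact_mod_cast Nat.factorial_two_mul_le_four_pow_mul_sq n
  rw [hpow, div_le_div_iff₀ (by positivity) (by positivity)]
  calc x ^ n * (2 * n)! ≤ x ^ n * (4 ^ n * (n ! : ℝ) ^ 2) := by gcongr
    _ = 4 ^ n * x ^ n * (n ! : ℝ) ^ 2 := by ring

theorem summable_pow_div_factorial_sq {x : ℝ} (hx : 0 ≤ x) :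
    Summable fun n => x ^ n / (n ! : ℝ) ^ 2 :=
  .of_nonneg_of_le (fun n => by positivity) (pow_div_factorial_sq_le hx)
    ((Real.summable_pow_div_factorial _).comp_injective (mul_right_injective₀ two_ne_zero))

theorem tsum_pow_div_factorial_sq_le {x : ℝ} (hx : 0 ≤ x) :
    ∑' n, x ^ n / (n ! : ℝ) ^ 2 ≤ Real.exp (2 * √x) := by
  rw [Real.exp_eq_exp_ℝ, NormedSpace.exp_eq_tsum_div]
  exact (summable_pow_div_factorial_sq hx).tsum_le_tsum_of_inj (2 * ·)
    (mul_right_injective₀ two_ne_zero) (fun _ _ => by positivity) (pow_div_factorial_sq_le hx)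
    (Real.summable_pow_div_factorial _)

theorem exp_borel_transform_bound_general (K₂ : ℝ)
    (a : ℝ → ℂ)
    (ha0 : ‖a 0‖ ≤ K₂) (ha' : ∀ σ : ℝ, 0 ≤ σ → ‖deriv a σ‖ ≤ K₂)
    (σ : ℝ) (hσ : 0 ≤ σ) :
    Summable (fun n : ℕ => (1 / ((n + 1).factorial : ℂ)) * Ahat (deriv a) (n + 1) σ) ∧
    ‖Complex.exp (a 0) *
        (1 + ∑' n : ℕ, (1 / ((n + 1).factorial : ℂ)) * Ahat (deriv a) (n + 1) σ)‖ ≤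
      Real.exp K₂ * Real.exp (2 * Real.sqrt K₂ * Real.sqrt σ) := by
  have hK₂ : 0 ≤ K₂ := (norm_nonneg _).trans ha0
  set x := K₂ * σ
  have hx : 0 ≤ x := mul_nonneg hK₂ hσ
  have hterm (n : ℕ) : ‖(1 / ((n + 1)! : ℂ)) * Ahat (deriv a) (n + 1) σ‖ ≤
      x ^ (n + 1) / ((n + 1)! : ℝ) ^ 2 := by
    rw [norm_mul, norm_div, norm_one, Complex.norm_natCast, sq, ← div_div, one_div_mul_eq_div]
    gcongr
    exact norm_Ahat_le hσ ha' (n + 1)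
  have hsum := (summable_nat_add_iff 1).2 (summable_pow_div_factorial_sq hx)
  refine ⟨.of_norm_bounded hsum hterm, ?_⟩
  have hexp : ‖Complex.exp (a 0)‖ ≤ Real.exp K₂ :=
    Complex.norm_exp _ ▸ Real.exp_le_exp.2 ((Complex.re_le_norm _).trans ha0)
  calc _ ≤ Real.exp K₂ * (1 + ∑' n : ℕ, x ^ (n + 1) / ((n + 1)! : ℝ) ^ 2) := by
        grw [norm_mul, norm_add_le, norm_one, tsum_of_norm_bounded hsum.hasSum hterm, hexp]
    _ = Real.exp K₂ * ∑' n : ℕ, x ^ n / (n ! : ℝ) ^ 2 := by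
        rw [(summable_pow_div_factorial_sq hx).tsum_eq_zero_add]; simp
    _ ≤ Real.exp K₂ * Real.exp (2 * √x) := by gcongr; exact tsum_pow_div_factorial_sq_le hx
    _ = _ := by rw [Real.sqrt_mul hK₂, mul_assoc]

theorem exp_borel_transform_bound (K₂ : ℝ) (hK₂ : 0 < K₂)
    (a : ℝ → ℂ) (ha : ContDiff ℝ 1 a)
    (ha0 : ‖a 0‖ ≤ K₂) (ha' : ∀ σ : ℝ, 0 ≤ σ → ‖deriv a σ‖ ≤ K₂)
    (σ : ℝ) (hσ : 0 ≤ σ) :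
    Summable (fun n : ℕ => (1 / ((n + 1).factorial : ℂ)) * Ahat (deriv a) (n + 1) σ) ∧
    ‖Complex.exp (a 0) *
        (1 + ∑' n : ℕ, (1 / ((n + 1).factorial : ℂ)) * Ahat (deriv a) (n + 1) σ)‖ ≤
      Real.exp K₂ * Real.exp (2 * Real.sqrt K₂ * Real.sqrt σ) :=
  exp_borel_transform_bound_general K₂ a ha0 ha' σ hσ
end

section
/- Let K_2 > 0, let â : [0,∞) → ℝ be continuously differentiable with |â(0)| ≤ K_2 and sup_σ |â'(σ)| ≤ K_2, and let h > 0. Define b̂ as the function with b̂(σ) = e^{â(0)}(1 + ∑_{n≥1} (1/n!) Â_n(σ)), Â_n(σ) = σ^n ∫_{u_1+⋯+u_n≤1} â'(u_1σ)⋯â'(u_nσ) du. Then exp(∫_0^∞ e^{−σ/h} â(σ) dσ/h) = ∫_0^∞ e^{−σ/h} b̂(σ) dσ/h. -/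
/-!
Integration by parts gives `∫₀^∞ e^{-σ/h} a(σ) dσ/h = a(0) + L` with `L = ∫₀^∞ e^{-σ/h} a'(σ) dσ`.
After rescaling the simplex, `Â_n(σ)` is the integral of `∏ a'(tᵢ)` over `{t ≥ 0, ∑ tᵢ ≤ σ}`;
integrating `e^{-σ/h}` over `σ ≥ ∑ tᵢ` first (Fubini) shows that its Laplace transform is `h Lⁿ`.
The same computation for `|a'|` gives `∑ₙ ‖e^{-σ/h} Â_n/n!‖₁ < ∞`, so the series for `b̂` may be
integrated term by term: `∫₀^∞ e^{-σ/h} b̂(σ) dσ/h = e^{a(0)} ∑ Lⁿ/n! = e^{a(0) + L}`.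
-/

open MeasureTheory

/-- `AhatR a n σ = σ^n ∫_{u_1+⋯+u_n ≤ 1, u_i ≥ 0} a(u_1 σ)⋯a(u_n σ) du` (real-valued). -/
noncomputable def AhatR (a : ℝ → ℝ) (n : ℕ) (σ : ℝ) : ℝ :=
  σ ^ n *
    ∫ u in {u : Fin n → ℝ | (∀ i, 0 ≤ u i) ∧ ∑ i, u i ≤ 1}, ∏ i, a (u i * σ)

open Set Filter Real Topology Pointwise

lemma exp_neg_div_eq_exp_mul (h σ : ℝ) : exp (-σ / h) = exp (-h⁻¹ * σ) := by
  ring_nf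

section ExpIntegrals

variable {h : ℝ}

lemma integrableOn_exp_neg_div_Ioi (hh : 0 < h) (c : ℝ) :
    IntegrableOn (fun σ => exp (-σ / h)) (Ioi c) := by
  simpa only [exp_neg_div_eq_exp_mul] using
    integrableOn_exp_mul_Ioi (neg_neg_of_pos (inv_pos.2 hh)) c

lemma integral_exp_neg_div_Ioi (hh : 0 < h) (c : ℝ) :
    ∫ σ in Ioi c, exp (-σ / h) = h * exp (-c / h) := by
  simp only [exp_neg_div_eq_exp_mul]
  rw [integral_exp_mul_Ioi (neg_neg_of_pos (inv_pos.2 hh)) c]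
  field_simp

lemma integrableOn_exp_neg_div_mul_of_abs_le {g : ℝ → ℝ} {A B : ℝ} (hg : AEStronglyMeasurable g)
    (hgb : ∀ x, 0 < x → |g x| ≤ A + B * x) (hh : 0 < h) :
    IntegrableOn (fun x => exp (-x / h) * g x) (Ioi 0) := by
  have hx : IntegrableOn (fun x => x * exp (-x / h)) (Ioi 0) := by
    simpa [exp_neg_div_eq_exp_mul] using
      integrableOn_rpow_mul_exp_neg_mul_rpow (s := 1) (p := 1) (by norm_num) one_pos (inv_pos.2 hh)
  refine Integrable.mono' (((integrableOn_exp_neg_div_Ioi hh 0).const_mul A).add (hx.const_mul B))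
    ((by fun_prop : Continuous fun x => exp (-x / h)).aestronglyMeasurable.mul hg).restrict ?_
  filter_upwards [self_mem_ae_restrict measurableSet_Ioi] with x hx0
  rw [Real.norm_eq_abs, abs_mul, abs_exp, Pi.add_apply]
  linarith [mul_le_mul_of_nonneg_left (hgb x hx0) (exp_pos (-x / h)).le]

lemma tendsto_exp_neg_div_mul_of_abs_le {g : ℝ → ℝ} {A B : ℝ} (hgb : ∀ x, 0 < x → |g x| ≤ A + B * x)
    (hh : 0 < h) : Tendsto (fun x => exp (-x / h) * g x) atTop (𝓝 0) := by
  have hx : Tendsto (fun x => x * exp (-x / h)) atTop (𝓝 0) := by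
    simpa [exp_neg_div_eq_exp_mul] using
      tendsto_rpow_mul_exp_neg_mul_atTop_nhds_zero 1 _ (inv_pos.2 hh)
  have hexp : Tendsto (fun x => exp (-x / h)) atTop (𝓝 0) :=
    tendsto_exp_atBot.comp ((tendsto_neg_atTop_atBot).atBot_div_const hh)
  refine squeeze_zero_norm' ?_ (by simpa using (hexp.const_mul A).add (hx.const_mul B))
  filter_upwards [eventually_gt_atTop 0] with x hx0
  rw [Real.norm_eq_abs, abs_mul, abs_exp]
  linarith [mul_le_mul_of_nonneg_left (hgb x hx0) (exp_pos (-x / h)).le]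

end ExpIntegrals

def solidSimplex (n : ℕ) (c : ℝ) : Set (Fin n → ℝ) :=
  {t | (∀ i, 0 ≤ t i) ∧ ∑ i, t i ≤ c}

lemma measurableSet_solidSimplex (n : ℕ) (c : ℝ) : MeasurableSet (solidSimplex n c) :=
  (measurableSet_setOfPred.2 <| Measurable.forall fun i =>
      (measurableSet_le measurable_const (measurable_pi_apply i)).mem).inter
    (measurableSet_le (Finset.measurable_sum _ fun i _ => measurable_pi_apply i) measurable_const)

lemma smul_solidSimplex_one {n : ℕ} {c : ℝ} (hc : 0 < c) :
    c • solidSimplex n 1 = solidSimplex n c := by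
  ext t
  rw [mem_smul_set_iff_inv_smul_mem₀ hc.ne']
  simp only [solidSimplex, mem_ofPred_eq, Pi.smul_apply, smul_eq_mul, ← Finset.mul_sum,
    inv_mul_le_one₀ hc]
  simp [hc]

lemma volume_solidSimplex_one_le (n : ℕ) : volume (solidSimplex n 1) ≤ 1 :=
  calc volume (solidSimplex n 1) ≤ volume (univ.pi fun _ : Fin n => Icc (0 : ℝ) 1) :=
        measure_mono fun t ht i _ =>
          ⟨ht.1 i, (Finset.single_le_sum (fun j _ => ht.1 j) (Finset.mem_univ i)).trans ht.2⟩
    _ = 1 := by rw [volume_pi_pi]; simp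

namespace AhatR

variable {f : ℝ → ℝ} {σ K : ℝ}

lemma eq_setIntegral_solidSimplex (f : ℝ → ℝ) (n : ℕ) (hσ : 0 < σ) :
    AhatR f n σ = ∫ t in solidSimplex n σ, ∏ i, f (t i) := by
  have := Measure.setIntegral_comp_smul_of_pos volume (fun t : Fin n → ℝ => ∏ i, f (t i))
    (solidSimplex n 1) hσ
  simp only [Pi.smul_apply, smul_eq_mul, smul_solidSimplex_one hσ, Module.finrank_fin_fun] at this
  rw [AhatR, show {u : Fin n → ℝ | (∀ i, 0 ≤ u i) ∧ ∑ i, u i ≤ 1} = solidSimplex n 1 from rfl]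
  simp_rw [mul_comm _ σ, this]
  field_simp

lemma zero (f : ℝ → ℝ) (σ : ℝ) : AhatR f 0 σ = 1 := by
  simp [AhatR, Measure.real, volume_pi]

lemma abs_le_pow (hf : ∀ x, |f x| ≤ K) (n : ℕ) (σ : ℝ) : |AhatR f n σ| ≤ (K * |σ|) ^ n := by
  have hK : 0 ≤ K := (abs_nonneg _).trans (hf 0)
  have hint : ‖∫ u in solidSimplex n 1, ∏ i, f (u i * σ)‖ ≤ K ^ n := by
    calc ‖∫ u in solidSimplex n 1, ∏ i, f (u i * σ)‖
        ≤ K ^ n * volume.real (solidSimplex n 1) :=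
          norm_setIntegral_le_of_norm_le_const
            ((volume_solidSimplex_one_le n).trans_lt ENNReal.one_lt_top) fun u _ => by
              simpa [Finset.abs_prod] using Finset.prod_le_prod (s := Finset.univ)
                (fun i _ => abs_nonneg _) fun i _ => hf (u i * σ)
      _ ≤ K ^ n * 1 := by
          gcongr
          exact ENNReal.toReal_le_of_le_ofReal zero_le_one
            (by simpa using volume_solidSimplex_one_le n)
      _ = K ^ n := mul_one _
  rw [AhatR, abs_mul, abs_pow, mul_pow, mul_comm (K ^ n)]
  exact mul_le_mul_of_nonneg_left hint (by positivity)

lemma abs_le_AhatR_abs (n : ℕ) (hσ : 0 < σ) : |AhatR f n σ| ≤ AhatR (fun x => |f x|) n σ := by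
  rw [eq_setIntegral_solidSimplex f n hσ, eq_setIntegral_solidSimplex _ n hσ]
  simpa only [Real.norm_eq_abs, Finset.abs_prod] using
    norm_integral_le_integral_norm (μ := volume.restrict (solidSimplex n σ))
      fun t => ∏ i, f (t i)

lemma summable_div_factorial (hf : ∀ x, |f x| ≤ K) (σ : ℝ) :
    Summable fun n => AhatR f n σ / n.factorial :=
  (Real.summable_pow_div_factorial (K * |σ|)).of_norm_bounded fun n => by
    rw [norm_div, Real.norm_eq_abs, Real.norm_natCast]
    exact div_le_div_of_nonneg_right (abs_le_pow hf n σ) (Nat.cast_nonneg _)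

lemma tsum_div_factorial (hf : ∀ x, |f x| ≤ K) (σ : ℝ) :
    ∑' n, AhatR f n σ / n.factorial =
      1 + ∑' n, 1 / ((n + 1).factorial : ℝ) * AhatR f (n + 1) σ := by
  rw [(summable_div_factorial hf σ).tsum_eq_zero_add]
  simp [zero, div_eq_inv_mul]

end AhatR

noncomputable def simplexLaplaceKernel (f : ℝ → ℝ) (h : ℝ) (n : ℕ) : (Fin n → ℝ) × ℝ → ℝ :=
  {p | p.1 ∈ solidSimplex n p.2}.indicator fun p => exp (-p.2 / h) * ∏ i, f (p.1 i)

namespace simplexLaplaceKernel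

variable {f : ℝ → ℝ} {h : ℝ} {n : ℕ}

lemma measurableSet_setOf_mem_solidSimplex (n : ℕ) :
    MeasurableSet {p : (Fin n → ℝ) × ℝ | p.1 ∈ solidSimplex n p.2} :=
  (measurableSet_setOfPred.2 <| Measurable.forall fun i =>
      (measurableSet_le measurable_const ((measurable_pi_apply i).comp measurable_fst)).mem).inter
    (measurableSet_le
      (Finset.measurable_sum _ fun i _ => (measurable_pi_apply i).comp measurable_fst)
      measurable_snd)

lemma abs_apply (f : ℝ → ℝ) (h : ℝ) (n : ℕ) (p : (Fin n → ℝ) × ℝ) :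
    |simplexLaplaceKernel f h n p| = simplexLaplaceKernel (fun x => |f x|) h n p := by
  by_cases hp : p.1 ∈ solidSimplex n p.2 <;>
    simp [simplexLaplaceKernel, hp, abs_mul, Finset.abs_prod]

lemma apply_of_neg (f : ℝ → ℝ) (h : ℝ) {σ : ℝ} (hσ : σ < 0) (t : Fin n → ℝ) :
    simplexLaplaceKernel f h n (t, σ) = 0 :=
  indicator_of_notMem (fun ht => hσ.not_ge <|
    (Finset.sum_nonneg fun i _ => ht.1 i).trans ht.2) _

lemma integral_fst (f : ℝ → ℝ) (h : ℝ) (n : ℕ) {σ : ℝ} (hσ : 0 < σ) :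
    ∫ t, simplexLaplaceKernel f h n (t, σ) = exp (-σ / h) * AhatR f n σ := by
  rw [AhatR.eq_setIntegral_solidSimplex f n hσ, ← integral_const_mul,
    ← integral_indicator (measurableSet_solidSimplex n σ)]
  rfl

lemma slice_eq (f : ℝ → ℝ) (h : ℝ) (t : Fin n → ℝ) :
    (fun σ => simplexLaplaceKernel f h n (t, σ)) =
      (Ici (∑ i, t i)).indicator fun σ => exp (-σ / h) * ∏ i, (Ici 0).indicator f (t i) := by
  ext σ
  by_cases ht : ∀ i, 0 ≤ t i
  · simp [simplexLaplaceKernel, solidSimplex, indicator_apply, ht]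
  · push Not at ht
    obtain ⟨i, hi⟩ := ht
    have hprod : ∏ j, (Ici 0).indicator f (t j) = 0 :=
      Finset.prod_eq_zero (Finset.mem_univ i) (indicator_of_notMem hi.not_ge _)
    have hker : t ∉ solidSimplex n σ := fun ht => hi.not_ge (ht.1 i)
    simp [simplexLaplaceKernel, hker, hprod]

lemma integrable_slice (hh : 0 < h) (t : Fin n → ℝ) :
    Integrable fun σ => simplexLaplaceKernel f h n (t, σ) := by
  rw [slice_eq, integrable_indicator_iff measurableSet_Ici, integrableOn_Ici_iff_integrableOn_Ioi]
  exact (integrableOn_exp_neg_div_Ioi hh _).mul_const _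

lemma integral_slice (hh : 0 < h) (t : Fin n → ℝ) :
    ∫ σ, simplexLaplaceKernel f h n (t, σ) =
      h * ∏ i, (Ici 0).indicator (fun x => exp (-x / h) * f x) (t i) := by
  rw [slice_eq, integral_indicator measurableSet_Ici, integral_Ici_eq_integral_Ioi,
    integral_mul_const, integral_exp_neg_div_Ioi hh, mul_assoc]
  congr 1
  rw [neg_div, Finset.sum_div, ← Finset.sum_neg_distrib, exp_sum, ← Finset.prod_mul_distrib]
  refine Finset.prod_congr rfl fun i _ => ?_
  by_cases hi : 0 ≤ t i <;> simp [hi, neg_div]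

lemma integrable (hf : Measurable f) (hfi : IntegrableOn (fun x => exp (-x / h) * f x) (Ioi 0))
    (hh : 0 < h) (n : ℕ) :
    Integrable (simplexLaplaceKernel f h n) (volume.prod volume) := by
  have hmeas : AEStronglyMeasurable (simplexLaplaceKernel f h n) (volume.prod volume) :=
    (Measurable.aestronglyMeasurable (by fun_prop)).indicator
      (measurableSet_setOf_mem_solidSimplex n)
  refine (integrable_prod_iff hmeas).2 ⟨.of_forall (integrable_slice hh), ?_⟩
  simp_rw [Real.norm_eq_abs, abs_apply, integral_slice hh]
  refine (Integrable.fintype_prod (f := fun _ => (Ici 0).indicator _) fun _ => ?_).const_mul h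
  rw [integrable_indicator_iff measurableSet_Ici, integrableOn_Ici_iff_integrableOn_Ioi]
  simpa [IntegrableOn, abs_mul] using hfi.abs

end simplexLaplaceKernel

namespace AhatR

variable {f : ℝ → ℝ} {h : ℝ}

lemma integrableOn_laplace (hf : Measurable f)
    (hfi : IntegrableOn (fun x => exp (-x / h) * f x) (Ioi 0)) (hh : 0 < h) (n : ℕ) :
    IntegrableOn (fun σ => exp (-σ / h) * AhatR f n σ) (Ioi 0) :=
  (simplexLaplaceKernel.integrable hf hfi hh n).integral_prod_right.integrableOn.congr_fun
    (fun _ hσ => simplexLaplaceKernel.integral_fst f h n hσ) measurableSet_Ioi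

lemma integral_laplace (hf : Measurable f)
    (hfi : IntegrableOn (fun x => exp (-x / h) * f x) (Ioi 0)) (hh : 0 < h) (n : ℕ) :
    ∫ σ in Ioi 0, exp (-σ / h) * AhatR f n σ = h * (∫ x in Ioi 0, exp (-x / h) * f x) ^ n := by
  have hvanish : ∀ᵐ σ, σ ∉ Ioi (0 : ℝ) → ∫ t, simplexLaplaceKernel f h n (t, σ) = 0 := by
    filter_upwards [measure_singleton (0 : ℝ) |> compl_mem_ae_iff.2] with σ hσ0 hσ
    simp only [simplexLaplaceKernel.apply_of_neg f h
      (lt_of_le_of_ne (not_lt.1 hσ) hσ0), integral_zero]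
  calc ∫ σ in Ioi 0, exp (-σ / h) * AhatR f n σ
      = ∫ σ in Ioi 0, ∫ t, simplexLaplaceKernel f h n (t, σ) :=
        setIntegral_congr_fun measurableSet_Ioi fun σ hσ =>
          (simplexLaplaceKernel.integral_fst f h n hσ).symm
    _ = ∫ σ, ∫ t, simplexLaplaceKernel f h n (t, σ) :=
        setIntegral_eq_integral_of_ae_compl_eq_zero hvanish
    _ = ∫ t, ∫ σ, simplexLaplaceKernel f h n (t, σ) :=
        (integral_integral_swap (f := fun t σ => simplexLaplaceKernel f h n (t, σ))
          (simplexLaplaceKernel.integrable hf hfi hh n)).symm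
    _ = h * (∫ x, (Ici 0).indicator (fun x => exp (-x / h) * f x) x) ^ n := by
        simp_rw [simplexLaplaceKernel.integral_slice hh]
        rw [integral_const_mul, volume_pi, integral_fintype_prod_eq_pow, Fintype.card_fin]
    _ = h * (∫ x in Ioi 0, exp (-x / h) * f x) ^ n := by
        rw [integral_indicator measurableSet_Ici, integral_Ici_eq_integral_Ioi]

lemma integral_norm_laplace_le (hf : Measurable f)
    (hfi : IntegrableOn (fun x => exp (-x / h) * f x) (Ioi 0)) (hh : 0 < h) (n : ℕ) :
    ∫ σ in Ioi 0, ‖exp (-σ / h) * AhatR f n σ‖ ≤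
      h * (∫ x in Ioi 0, exp (-x / h) * |f x|) ^ n := by
  have hfi_abs : IntegrableOn (fun x => exp (-x / h) * |f x|) (Ioi 0) := by
    simpa [IntegrableOn, abs_mul] using hfi.abs
  rw [← integral_laplace hf.abs hfi_abs hh n]
  refine setIntegral_mono_on (integrableOn_laplace hf hfi hh n).norm
    (integrableOn_laplace hf.abs hfi_abs hh n) measurableSet_Ioi fun σ hσ => ?_
  rw [Real.norm_eq_abs, abs_mul, abs_exp]
  exact mul_le_mul_of_nonneg_left (abs_le_AhatR_abs n hσ) (exp_pos _).le

theorem integral_tsum_laplace_div_factorial (hf : Measurable f)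
    (hfi : IntegrableOn (fun x => exp (-x / h) * f x) (Ioi 0)) (hh : 0 < h) :
    ∫ σ in Ioi 0, ∑' n, exp (-σ / h) * (AhatR f n σ / n.factorial) =
      h * exp (∫ x in Ioi 0, exp (-x / h) * f x) := by
  have hterm (n : ℕ) :
      IntegrableOn (fun σ => exp (-σ / h) * (AhatR f n σ / n.factorial)) (Ioi 0) := by
    simpa only [IntegrableOn, mul_div_assoc] using (integrableOn_laplace hf hfi hh n).div_const _
  have hsum : Summable fun n : ℕ => ∫ σ in Ioi 0, ‖exp (-σ / h) * (AhatR f n σ / n.factorial)‖ := by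
    refine .of_nonneg_of_le (fun n => integral_nonneg fun _ => norm_nonneg _) (fun n => ?_)
      ((Real.summable_pow_div_factorial (∫ x in Ioi 0, exp (-x / h) * |f x|)).mul_left h)
    simp_rw [← mul_div_assoc, norm_div, Real.norm_natCast]
    rw [integral_div]
    exact div_le_div_of_nonneg_right (integral_norm_laplace_le hf hfi hh n) (Nat.cast_nonneg _)
  rw [← integral_tsum_of_summable_integral_norm hterm hsum]
  simp_rw [← mul_div_assoc, integral_div, integral_laplace hf hfi hh, mul_div_assoc]
  rw [tsum_mul_left, exp_eq_exp_ℝ, NormedSpace.exp_eq_tsum_div]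

end AhatR

lemma abs_le_abs_add_mul_of_abs_deriv_le {a : ℝ → ℝ} {K : ℝ} (ha : Differentiable ℝ a)
    (ha' : ∀ x, |deriv a x| ≤ K) (x : ℝ) : |a x| ≤ |a 0| + K * |x| := by
  have := convex_univ.norm_image_sub_le_of_norm_deriv_le (fun y _ => ha y) (fun y _ => ha' y)
    (mem_univ 0) (mem_univ x)
  rw [Real.norm_eq_abs, Real.norm_eq_abs, sub_zero] at this
  linarith [abs_sub_abs_le_abs_sub (a x) (a 0)]

lemma integral_exp_neg_div_mul_div_eq_add_integral_deriv {a : ℝ → ℝ} {K h : ℝ}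
    (ha : Differentiable ℝ a) (ha' : ∀ x, |deriv a x| ≤ K) (hh : 0 < h) :
    ∫ σ in Ioi 0, exp (-σ / h) * a σ / h = a 0 + ∫ σ in Ioi 0, exp (-σ / h) * deriv a σ := by
  have hgrowth : ∀ x, 0 < x → |a x| ≤ |a 0| + K * x := fun x hx => by
    simpa [abs_of_pos hx] using abs_le_abs_add_mul_of_abs_deriv_le ha ha' x
  have hint : IntegrableOn (fun σ => exp (-σ / h) * a σ) (Ioi 0) :=
    integrableOn_exp_neg_div_mul_of_abs_le ha.continuous.aestronglyMeasurable hgrowth hh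
  have hint' : IntegrableOn (fun σ => exp (-σ / h) * deriv a σ) (Ioi 0) :=
    integrableOn_exp_neg_div_mul_of_abs_le (A := K) (B := 0)
      (measurable_deriv a).aestronglyMeasurable (fun x _ => by simpa using ha' x) hh
  have hderiv : ∀ x ∈ Ici (0 : ℝ), HasDerivAt (fun σ => -(exp (-σ / h) * a σ))
      (exp (-x / h) * a x / h - exp (-x / h) * deriv a x) x := fun x _ => by
    have hexp : HasDerivAt (fun σ => exp (-σ / h)) (exp (-x / h) * (-1 / h)) x :=
      ((hasDerivAt_neg x).div_const h).exp
    exact (hexp.mul (ha x).hasDerivAt).neg.congr_deriv (by ring)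
  have := integral_Ioi_of_hasDerivAt_of_tendsto' hderiv ((hint.div_const h).sub hint')
    (by simpa using (tendsto_exp_neg_div_mul_of_abs_le hgrowth hh).neg)
  rw [integral_sub (hint.div_const h) hint'] at this
  simp only [neg_zero, zero_div, exp_zero, one_mul, sub_neg_eq_add, zero_add] at this
  linarith

theorem exp_laplace_is_laplace_general (K₂ : ℝ)
    (a : ℝ → ℝ) (ha : ContDiff ℝ 1 a)
    (ha' : ∀ σ : ℝ, |deriv a σ| ≤ K₂)
    (h : ℝ) (hh : 0 < h)
    (b : ℝ → ℝ)
    (hb : ∀ σ : ℝ, b σ = Real.exp (a 0) *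
        (1 + ∑' n : ℕ, (1 / ((n + 1).factorial : ℝ)) * AhatR (deriv a) (n + 1) σ)) :
    Real.exp (∫ σ in Set.Ioi (0:ℝ), Real.exp (-σ / h) * a σ / h) =
      ∫ σ in Set.Ioi (0:ℝ), Real.exp (-σ / h) * b σ / h := by
  have hb_series : ∀ σ ∈ Ioi (0 : ℝ), exp (-σ / h) * b σ / h =
      exp (a 0) / h * ∑' n, exp (-σ / h) * (AhatR (deriv a) n σ / n.factorial) := fun σ _ => by
    rw [hb, ← AhatR.tsum_div_factorial ha' σ, tsum_mul_left]
    ring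
  have hfi : IntegrableOn (fun x => exp (-x / h) * deriv a x) (Ioi 0) :=
    integrableOn_exp_neg_div_mul_of_abs_le (A := K₂) (B := 0)
      (measurable_deriv a).aestronglyMeasurable (fun x _ => by simpa using ha' x) hh
  rw [setIntegral_congr_fun measurableSet_Ioi hb_series, integral_const_mul,
    AhatR.integral_tsum_laplace_div_factorial (measurable_deriv a) hfi hh,
    integral_exp_neg_div_mul_div_eq_add_integral_deriv (ha.differentiable one_ne_zero) ha' hh,
    exp_add]
  field_simp

theorem exp_laplace_is_laplace (K₂ : ℝ) (hK₂ : 0 < K₂)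
    (a : ℝ → ℝ) (ha : ContDiff ℝ 1 a)
    (ha0 : |a 0| ≤ K₂) (ha' : ∀ σ : ℝ, |deriv a σ| ≤ K₂)
    (h : ℝ) (hh : 0 < h)
    (b : ℝ → ℝ)
    (hb : ∀ σ : ℝ, b σ = Real.exp (a 0) *
        (1 + ∑' n : ℕ, (1 / ((n + 1).factorial : ℝ)) * AhatR (deriv a) (n + 1) σ)) :
    Real.exp (∫ σ in Set.Ioi (0:ℝ), Real.exp (-σ / h) * a σ / h) =
      ∫ σ in Set.Ioi (0:ℝ), Real.exp (-σ / h) * b σ / h :=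
  exp_laplace_is_laplace_general K₂ a ha ha' h hh b hb
end

section
/- Let â : [0,∞) → ℂ be continuous with |â(τ)| ≤ C e^{Kτ} for some C, K > 0, and let h > 0 with 1/h > K. Then 2∫_0^∞ â(τ²) e^{−τ²/h} dτ/(πh)^{1/2} = ∫_0^∞ b̂(τ) e^{−τ/h} dτ/h, where b̂(τ) := (2/π)∫_0^{π/2} â(τ sin²θ) dθ. -/
/-!
Substitute `τ = r²` on the right-hand side: the weight becomes `2r e^{-r²/h}`, and
`r² sin² θ = (r sin θ)²`, `r² = (r cos θ)² + (r sin θ)²`, so the double integral over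
`r > 0`, `0 < θ < π/2` is the polar form of the integral of `e^{-x²/h} · â(y²) e^{-y²/h}` over
the first quadrant. By Fubini this factors, and the `x`-integral is the half Gaussian
`√(πh)/2`.
-/

open MeasureTheory Set Real

theorem integral_comp_sq_Ioi {E : Type*} [NormedAddCommGroup E] [NormedSpace ℝ E] (g : ℝ → E) :
    ∫ x in Ioi 0, (2 * x) • g (x ^ 2) = ∫ y in Ioi 0, g y := by
  have := integral_comp_rpow_Ioi_of_pos (g := g) two_pos
  norm_num at this
  exact this

theorem polarCoord_symm_image_Ioi_prod_Ioo :
    polarCoord.symm '' (Ioi 0 ×ˢ Ioo 0 (π / 2)) = Ioi 0 ×ˢ Ioi 0 := by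
  ext q
  constructor
  · rintro ⟨⟨r, θ⟩, ⟨hr, hθ⟩, rfl⟩
    exact ⟨mul_pos hr (cos_pos_of_mem_Ioo ⟨by linarith [hθ.1, pi_pos], hθ.2⟩),
      mul_pos hr (sin_pos_of_pos_of_lt_pi hθ.1 (by linarith [hθ.2, pi_pos]))⟩
  · rintro ⟨hx : 0 < q.1, hy : 0 < q.2⟩
    refine ⟨polarCoord q, ⟨?_, ?_, ?_⟩, polarCoord.left_inv (Or.inl hx)⟩
    · exact (polarCoord.map_source (Or.inl hx)).1
    · refine (Complex.arg_nonneg_iff.2 ?_).lt_of_ne' ?_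
      · simp [hy.le]
      · simp [Complex.arg_eq_zero_iff, hy.ne']
    · simp [Complex.arg_lt_pi_div_two_iff, hx]

theorem integral_Ioi_prod_Ioi_eq_integral_polar {E : Type*} [NormedAddCommGroup E]
    [NormedSpace ℝ E] [CompleteSpace E] {f : ℝ × ℝ → E} (hf : IntegrableOn f (Ioi 0 ×ˢ Ioi 0)) :
    ∫ p in Ioi 0 ×ˢ Ioi 0, f p =
      ∫ r in Ioi 0, ∫ θ in Ioo 0 (π / 2), r • f (r * cos θ, r * sin θ) := by
  set P : Set (ℝ × ℝ) := Ioi 0 ×ˢ Ioo 0 (π / 2)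
  have hP : MeasurableSet P := measurableSet_Ioi.prod measurableSet_Ioo
  have hderiv : ∀ p ∈ P, HasFDerivWithinAt polarCoord.symm (fderivPolarCoordSymm p) P p :=
    fun p _ => (hasFDerivAt_polarCoord_symm p).hasFDerivWithinAt
  have hinj : InjOn polarCoord.symm P := polarCoord.symm.injOn.mono
    (prod_mono_right (Ioo_subset_Ioo (by linarith [pi_pos]) (by linarith [pi_pos])))
  have hjac : EqOn (fun p => |(fderivPolarCoordSymm p).det| • f (polarCoord.symm p))
      (fun p => p.1 • f (p.1 * cos p.2, p.1 * sin p.2)) P := fun p hp => by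
    simp [det_fderivPolarCoordSymm, abs_of_pos (show 0 < p.1 from hp.1)]
  rw [← polarCoord_symm_image_Ioi_prod_Ioo] at hf ⊢
  rw [integrableOn_image_iff_integrableOn_abs_det_fderiv_smul volume hP hderiv hinj,
    integrableOn_congr_fun hjac hP] at hf
  rw [integral_image_eq_integral_abs_det_fderiv_smul volume hP hderiv hinj,
    setIntegral_congr_fun hP hjac, Measure.volume_eq_prod, setIntegral_prod _ hf]

section GrowthBound

variable {a : ℝ → ℂ} {C K h : ℝ}

theorem integrableOn_comp_sq_mul_exp_neg_sq_div (ha : Continuous a)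
    (hgrowth : ∀ τ : ℝ, 0 ≤ τ → ‖a τ‖ ≤ C * exp (K * τ)) (hK : K < 1 / h) :
    IntegrableOn (fun y => a (y ^ 2) * (exp (-(y ^ 2) / h) : ℂ)) (Ioi 0) := by
  refine Integrable.mono' ((integrable_exp_neg_mul_sq (sub_pos.2 hK)).const_mul C).integrableOn
    (by fun_prop) ((ae_restrict_iff' measurableSet_Ioi).2 (.of_forall fun y _ => ?_))
  calc ‖a (y ^ 2) * (exp (-(y ^ 2) / h) : ℂ)‖ = ‖a (y ^ 2)‖ * exp (-(y ^ 2) / h) := by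
        rw [norm_mul, Complex.norm_real, norm_of_nonneg (exp_pos _).le]
    _ ≤ C * exp (K * y ^ 2) * exp (-(y ^ 2) / h) := by gcongr; exact hgrowth _ (sq_nonneg y)
    _ = C * exp (-(1 / h - K) * y ^ 2) := by rw [mul_assoc, ← exp_add]; ring_nf

theorem integral_polar_comp_sin_sq (ha : Continuous a)
    (hgrowth : ∀ τ : ℝ, 0 ≤ τ → ‖a τ‖ ≤ C * exp (K * τ)) (hh : 0 < h) (hK : K < 1 / h) :
    ∫ r in Ioi 0, ((r * exp (-(r ^ 2) / h) : ℝ) : ℂ) * ∫ θ in Ioo 0 (π / 2), a (r ^ 2 * sin θ ^ 2) =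
      ((√(π * h) / 2 : ℝ) : ℂ) * ∫ y in Ioi 0, a (y ^ 2) * (exp (-(y ^ 2) / h) : ℂ) := by
  set f : ℝ × ℝ → ℂ := fun p =>
    (exp (-(1 / h) * p.1 ^ 2) : ℂ) * (a (p.2 ^ 2) * exp (-(p.2 ^ 2) / h))
  have hf : IntegrableOn f (Ioi 0 ×ˢ Ioi 0) := by
    rw [IntegrableOn, Measure.volume_eq_prod, ← Measure.prod_restrict]
    exact (integrable_exp_neg_mul_sq (one_div_pos.2 hh)).ofReal.integrableOn.mul_prod
      (integrableOn_comp_sq_mul_exp_neg_sq_div ha hgrowth hK)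
  have hf_polar (r θ : ℝ) : r • f (r * cos θ, r * sin θ) =
      ((r * exp (-(r ^ 2) / h) : ℝ) : ℂ) * a (r ^ 2 * sin θ ^ 2) := by
    have hexp : exp (-(1 / h) * (r * cos θ) ^ 2) * exp (-((r * sin θ) ^ 2) / h) =
        exp (-(r ^ 2) / h) := by
      rw [← exp_add]; congr 1; linear_combination (-r ^ 2 / h) * cos_sq_add_sin_sq θ
    rw [← hexp]
    simp only [f, Complex.real_smul, Complex.ofReal_mul, mul_pow]
    ring
  calc ∫ r in Ioi 0, ((r * exp (-(r ^ 2) / h) : ℝ) : ℂ) *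
          ∫ θ in Ioo 0 (π / 2), a (r ^ 2 * sin θ ^ 2)
      = ∫ r in Ioi 0, ∫ θ in Ioo 0 (π / 2), r • f (r * cos θ, r * sin θ) := by
        simp_rw [hf_polar, integral_const_mul]
    _ = ∫ p in Ioi 0 ×ˢ Ioi 0, f p := (integral_Ioi_prod_Ioi_eq_integral_polar hf).symm
    _ = _ := by
        rw [Measure.volume_eq_prod, setIntegral_prod_mul (fun x : ℝ => (exp (-(1 / h) * x ^ 2) : ℂ))
          (fun y => a (y ^ 2) * (exp (-(y ^ 2) / h) : ℂ)), integral_complex_ofReal,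
          integral_gaussian_Ioi, div_div_eq_mul_div, div_one]

end GrowthBound

theorem hv_half_to_one_gaussian_general (a : ℝ → ℂ) (ha : Continuous a)
    (C K : ℝ)
    (hgrowth : ∀ τ : ℝ, 0 ≤ τ → ‖a τ‖ ≤ C * Real.exp (K * τ))
    (h : ℝ) (hh : 0 < h) (hhK : K < 1 / h)
    (b : ℝ → ℂ)
    (hb : ∀ τ : ℝ, b τ = ((2 / Real.pi : ℝ) : ℂ) *
        ∫ θ in (0:ℝ)..(Real.pi / 2), a (τ * Real.sin θ ^ 2)) :
    2 * ∫ τ in Set.Ioi (0:ℝ), a (τ ^ 2) * (Real.exp (-(τ ^ 2) / h) : ℂ) /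
        ((Real.sqrt (Real.pi * h) : ℝ) : ℂ) =
      ∫ τ in Set.Ioi (0:ℝ), b τ * (Real.exp (-τ / h) : ℂ) / (h : ℂ) := by
  have hb_Ioo (τ : ℝ) : b τ = ((2 / π : ℝ) : ℂ) * ∫ θ in Ioo 0 (π / 2), a (τ * sin θ ^ 2) := by
    rw [hb, intervalIntegral.integral_of_le pi_div_two_pos.le, integral_Ioc_eq_integral_Ioo]
  have hconst : 4 / (π * h) * (√(π * h) / 2) = 2 / √(π * h) := by
    have : √(π * h) ≠ 0 := by positivity
    field_simp
    rw [sq_sqrt (by positivity)]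
    ring
  calc 2 * ∫ τ in Ioi 0, a (τ ^ 2) * (exp (-(τ ^ 2) / h) : ℂ) / ((√(π * h) : ℝ) : ℂ)
      = ((4 / (π * h) : ℝ) : ℂ) * (((√(π * h) / 2 : ℝ) : ℂ) *
          ∫ τ in Ioi 0, a (τ ^ 2) * (exp (-(τ ^ 2) / h) : ℂ)) := by
        rw [integral_div, ← mul_assoc, ← Complex.ofReal_mul, hconst]
        push_cast
        ring
    _ = ∫ r in Ioi 0, (2 * r) • (b (r ^ 2) * (exp (-(r ^ 2) / h) : ℂ) / h) := by
        rw [← integral_polar_comp_sin_sq ha hgrowth hh hhK, ← integral_const_mul]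
        congr with r
        simp only [hb_Ioo, Complex.real_smul, Complex.ofReal_mul, Complex.ofReal_div,
          Complex.ofReal_ofNat]
        ring
    _ = ∫ τ in Ioi 0, b τ * (exp (-τ / h) : ℂ) / h :=
        integral_comp_sq_Ioi (fun τ => b τ * (exp (-τ / h) : ℂ) / h)

theorem hv_half_to_one_gaussian (a : ℝ → ℂ) (ha : Continuous a)
    (C K : ℝ) (hC : 0 < C) (hK : 0 < K)
    (hgrowth : ∀ τ : ℝ, 0 ≤ τ → ‖a τ‖ ≤ C * Real.exp (K * τ))
    (h : ℝ) (hh : 0 < h) (hhK : K < 1 / h)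
    (b : ℝ → ℂ)
    (hb : ∀ τ : ℝ, b τ = ((2 / Real.pi : ℝ) : ℂ) *
        ∫ θ in (0:ℝ)..(Real.pi / 2), a (τ * Real.sin θ ^ 2)) :
    2 * ∫ τ in Set.Ioi (0:ℝ), a (τ ^ 2) * (Real.exp (-(τ ^ 2) / h) : ℂ) /
        ((Real.sqrt (Real.pi * h) : ℝ) : ℂ) =
      ∫ τ in Set.Ioi (0:ℝ), b τ * (Real.exp (-τ / h) : ℂ) / (h : ℂ) :=
  hv_half_to_one_gaussian_general a ha C K hgrowth h hh hhK b hb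
end
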